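/- arXiv:1301.2960 — 6 statements merged into one kernel-verified Lean document; each statement's English description precedes it below -/
import Mathlib

section
/- The point configuration Q³ = {−1, 0, 1}³ in ℝ³ is framed by its subset W = {−1, 1}³ ∪ {(0, 0, 0)} consisting of the eight vertices of the cube [−1, 1]³ together with the origin. -/
open scoped RealInnerProductSpace

noncomputable section

/-- `ℝ^n` with the Euclidean norm. -/
abbrev ESp (n : ℕ) := EuclideanSpace ℝ (Fin n)

/-- A polytope is the convex hull of a finite set of points. -/
def IsPolytope {n : ℕ} (P : Set (ESp n)) : Prop :=
  ∃ V : Finset (ESp n), P = convexHull ℝ (V : Set (ESp n))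

/-- The vertex set `F₀(P)` of a polytope: its extreme points. -/
def verts {n : ℕ} (P : Set (ESp n)) : Set (ESp n) := Set.extremePoints ℝ P

/-- The dimension of a polytope: the dimension of its affine hull. -/
def polyDim {n : ℕ} (P : Set (ESp n)) : ℕ :=
  Module.finrank ℝ (affineSpan ℝ P).direction

/-- The faces of a polytope `P` are `∅`, `P`, and the intersections of `P` with a
hyperplane having `P` in one of its closed sides. -/
def IsFaceOf {n : ℕ} (P F : Set (ESp n)) : Prop :=
  F = ∅ ∨ F = P ∨ ∃ (c : ESp n) (a : ℝ), c ≠ 0 ∧ (∀ x ∈ P, ⟪c, x⟫ ≤ a) ∧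
    F = {x ∈ P | ⟪c, x⟫ = a}

/-- Denominator `⟨c, x⟩ + δ` of the projective map given by an `(n+1)×(n+1)` matrix `M`
(the last row of `M` is `(c, δ)`). -/
def projDen {n : ℕ} (M : Matrix (Fin (n + 1)) (Fin (n + 1)) ℝ) (x : ESp n) : ℝ :=
  (∑ j, M (Fin.last n) j.castSucc * x j) + M (Fin.last n) (Fin.last n)

/-- The projective transformation `x ↦ (Ax + b)/(⟨c, x⟩ + δ)` given by the
`(n+1)×(n+1)` matrix `M` with blocks `A, b, c, δ`. -/
def projApp {n : ℕ} (M : Matrix (Fin (n + 1)) (Fin (n + 1)) ℝ) (x : ESp n) : ESp n :=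
  WithLp.toLp 2 (fun i : Fin n => ((∑ j, M i.castSucc j.castSucc * x j) + M i.castSucc (Fin.last n)) / projDen M x)

/-- Two sets are projectively equivalent if some projective transformation (given by an
invertible matrix), defined at every point of the first set, maps it bijectively onto the
second one. -/
def ProjEquiv {n : ℕ} (S T : Set (ESp n)) : Prop :=
  ∃ M : Matrix (Fin (n + 1)) (Fin (n + 1)) ℝ, IsUnit M.det ∧
    (∀ x ∈ S, projDen M x ≠ 0) ∧ Set.BijOn (projApp M) S T

/-- `S` is the vertex set of some face of `P`. -/
def IsVertexSetOfFace {n : ℕ} (P S : Set (ESp n)) : Prop :=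
  ∃ F, IsFaceOf P F ∧ verts F = S

/-- Combinatorial equivalence of two polytopes under a vertex bijection `φ`. -/
def CombEquivUnder {n : ℕ} (P P' : Set (ESp n)) (φ : ESp n → ESp n) : Prop :=
  Set.BijOn φ (verts P) (verts P') ∧
  ∀ S ⊆ verts P, IsVertexSetOfFace P S ↔ IsVertexSetOfFace P' (φ '' S)

/-- A polytope `P ⊆ ℝ^n` is projectively unique if every combinatorial equivalence of `P`
with a polytope `P'` in `ℝ^n` agrees on the vertices with a projective transformation
defined at all points of `P` and mapping `P` onto `P'`. -/
def ProjUniquePolytope {n : ℕ} (P : Set (ESp n)) : Prop :=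
  IsPolytope P ∧ ∀ (P' : Set (ESp n)) (φ : ESp n → ESp n),
    IsPolytope P' → CombEquivUnder P P' φ →
    ∃ M : Matrix (Fin (n + 1)) (Fin (n + 1)) ℝ, IsUnit M.det ∧
      (∀ x ∈ P, projDen M x ≠ 0) ∧ (∀ w ∈ verts P, projApp M w = φ w) ∧
      Set.BijOn (projApp M) P P'

/-- The standard coordinate embedding `ℝ^d ⊆ ℝ^n` for `d ≤ n`. -/
def coordEmbed {d n : ℕ} (_h : d ≤ n) (x : ESp d) : ESp n :=
  WithLp.toLp 2 (fun i : Fin n => if h' : (i : ℕ) < d then x ⟨i, h'⟩ else 0)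

/-- Lawrence equivalence of two point configurations under a bijection `φ`:
for every oriented hyperplane `H` there is an oriented hyperplane `H'` with
`φ(R ∩ H₊) = R' ∩ H'₊` and `φ(R ∩ H₋) = R' ∩ H'₋`. -/
def LawrenceEquivConfig {n : ℕ} (R R' : Set (ESp n)) (φ : ESp n → ESp n) : Prop :=
  Set.BijOn φ R R' ∧
  ∀ (c : ESp n) (a : ℝ), c ≠ 0 →
    ∃ (c' : ESp n) (a' : ℝ), c' ≠ 0 ∧
      φ '' (R ∩ {x | a < ⟪c, x⟫}) = R' ∩ {x | a' < ⟪c', x⟫} ∧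
      φ '' (R ∩ {x | ⟪c, x⟫ < a}) = R' ∩ {x | ⟪c', x⟫ < a'}

/-- A point configuration is projectively unique if every Lawrence equivalence with another
point configuration agrees on it with a projective transformation defined at all its points. -/
def ProjUniqueConfig {n : ℕ} (R : Set (ESp n)) : Prop :=
  R.Finite ∧ ∀ (R' : Set (ESp n)) (φ : ESp n → ESp n),
    LawrenceEquivConfig R R' φ →
    ∃ M : Matrix (Fin (n + 1)) (Fin (n + 1)) ℝ, IsUnit M.det ∧
      (∀ x ∈ R, projDen M x ≠ 0) ∧ ∀ x ∈ R, projApp M x = φ x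

/-- `R` is framed by `Q ⊆ R` if every Lawrence equivalence of `R` with another point
configuration that is the identity on `Q` is the identity on `R`. -/
def FramedBy {n : ℕ} (R Q : Set (ESp n)) : Prop :=
  Q ⊆ R ∧ ∀ (R' : Set (ESp n)) (φ : ESp n → ESp n),
    LawrenceEquivConfig R R' φ → (∀ q ∈ Q, φ q = q) → ∀ x ∈ R, φ x = x

/-- A PP configuration: a polytope together with a finite point set disjoint from it. -/
def IsPPConfig {n : ℕ} (P R : Set (ESp n)) : Prop :=
  IsPolytope P ∧ R.Finite ∧ P ∩ R = ∅

/-- Lawrence equivalence of PP configurations under a bijection `φ` of `F₀(P) ∪ R` with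
`F₀(P') ∪ R'` mapping `F₀(P)` onto `F₀(P')` and `R` onto `R'`. -/
def LawrenceEquivPP {n : ℕ} (P R P' R' : Set (ESp n)) (φ : ESp n → ESp n) : Prop :=
  Set.InjOn φ (verts P ∪ R) ∧ Set.BijOn φ (verts P) (verts P') ∧ Set.BijOn φ R R' ∧
  ∀ (c : ESp n) (a : ℝ), c ≠ 0 → (∀ x ∈ P, ⟪c, x⟫ ≤ a) →
    ∃ (c' : ESp n) (a' : ℝ), c' ≠ 0 ∧ (∀ x ∈ P', ⟪c', x⟫ ≤ a') ∧
      φ '' (verts P ∩ {x | ⟪c, x⟫ < a}) = verts P' ∩ {x | ⟪c', x⟫ < a'} ∧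
      φ '' (R ∩ {x | a < ⟪c, x⟫}) = R' ∩ {x | a' < ⟪c', x⟫} ∧
      φ '' (R ∩ {x | ⟪c, x⟫ < a}) = R' ∩ {x | ⟪c', x⟫ < a'}

/-- A PP configuration `(P, R)` is projectively unique if every Lawrence equivalence with
another PP configuration agrees on `F₀(P) ∪ R` with a projective transformation defined at
all points of `F₀(P) ∪ R`. -/
def ProjUniquePP {n : ℕ} (P R : Set (ESp n)) : Prop :=
  IsPPConfig P R ∧ ∀ (P' R' : Set (ESp n)) (φ : ESp n → ESp n),
    IsPPConfig P' R' → LawrenceEquivPP P R P' R' φ →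
    ∃ M : Matrix (Fin (n + 1)) (Fin (n + 1)) ℝ, IsUnit M.det ∧
      (∀ x ∈ verts P ∪ R, projDen M x ≠ 0) ∧ ∀ x ∈ verts P ∪ R, projApp M x = φ x

/-- `(P, R)` is framed by `Q ⊆ F₀(P) ∪ R` if every Lawrence equivalence of `(P, R)` with
another PP configuration that is the identity on `Q` is the identity. -/
def FramedPP {n : ℕ} (P R Q : Set (ESp n)) : Prop :=
  Q ⊆ verts P ∪ R ∧ ∀ (P' R' : Set (ESp n)) (φ : ESp n → ESp n),
    IsPPConfig P' R' → LawrenceEquivPP P R P' R' φ → (∀ q ∈ Q, φ q = q) →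
    ∀ x ∈ verts P ∪ R, φ x = x

/-- A polytope `P` is framed by `Q ⊆ F₀(P)` if `(P, ∅)` is framed by `Q`. -/
def PolytopeFramedBy {n : ℕ} (P Q : Set (ESp n)) : Prop := FramedPP P ∅ Q

/-- A weak projective triple `(P, Q, R)` in `ℝ^d`. -/
def WeakProjTriple {d : ℕ} (P Q R : Set (ESp d)) : Prop :=
  IsPolytope P ∧ Q ⊆ verts P ∧ R.Finite ∧
  ProjUniqueConfig (Q ∪ R) ∧
  PolytopeFramedBy P Q ∧
  ∃ S ⊆ R, ∃ (c : ESp d) (a : ℝ), c ≠ 0 ∧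
    (affineSpan ℝ S : Set (ESp d)) = {x | ⟪c, x⟫ = a} ∧
    {x | ⟪c, x⟫ = a} ∩ P = ∅

/-- A subpolytope of `S`: a convex hull of a subset of the vertices of `S`. -/
def IsSubpolytopeOf {n : ℕ} (P S : Set (ESp n)) : Prop :=
  ∃ V ⊆ verts S, P = convexHull ℝ V

/-- Stacked `d`-polytopes: `d`-simplices, closed under stacking a point `v` beyond a facet
`F` (i.e. `v` and the interior of `S` lie strictly on opposite sides of the affine hull of
`F`, and strictly on the same side of the affine hull of every other facet of `S`). -/
inductive IsStackedPolytope (d : ℕ) : Set (ESp d) → Prop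
  | simplex (V : Finset (ESp d)) (hcard : V.card = d + 1)
      (hind : AffineIndependent ℝ (Subtype.val : {x : ESp d // x ∈ V} → ESp d)) :
      IsStackedPolytope d (convexHull ℝ (V : Set (ESp d)))
  | stack (S F : Set (ESp d)) (v : ESp d) (hS : IsStackedPolytope d S)
      (hF : IsFaceOf S F) (hdim : polyDim F + 1 = d)
      (hbeyond : ∀ F', IsFaceOf S F' → polyDim F' + 1 = d →
        ∃ (c : ESp d) (a : ℝ), c ≠ 0 ∧
          (affineSpan ℝ F' : Set (ESp d)) = {x | ⟪c, x⟫ = a} ∧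
          interior S ⊆ {x | ⟪c, x⟫ < a} ∧
          (F' = F → a < ⟪c, v⟫) ∧ (F' ≠ F → ⟪c, v⟫ < a)) :
      IsStackedPolytope d (convexHull ℝ (S ∪ {v}))

/-- The first standard basis vector `e₁` of `ℝ²`. -/
def e1 : ESp 2 := EuclideanSpace.single 0 1

/-- The point configuration `Q² + 𝟏 = {0, 1, 2}²` in `ℝ²`. -/
def Qsq : Set (ESp 2) := {p | ∀ i, p i = 0 ∨ p i = 1 ∨ p i = 2}

/-- A functional arrangement for a function `f : ℝ^ι → ℝ`. -/
def IsFunctionalArrangement {ι : Type} [Fintype ι]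
    (f : (ι → ℝ) → ℝ) (F : (ι → ℝ) → Set (ESp 2)) : Prop :=
  ∀ x : ι → ℝ,
    (F x).Finite ∧
    (f x) • e1 ∈ F x ∧
    (∀ i, (x i) • e1 ∈ F x) ∧
    Qsq ⊆ F x ∧
    FramedBy (F x) ({p | ∃ i, p = (x i) • e1} ∪ Qsq) ∧
    ∀ (R' : Set (ESp 2)) (φ : ESp 2 → ESp 2),
      LawrenceEquivConfig (F x) R' φ → (∀ q ∈ Qsq, φ q = q) →
      φ ((f x) • e1) = (f x) • e1 →
      ∃ y : ι → ℝ, f y = f x ∧ ∀ i, φ ((x i) • e1) = (y i) • e1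

/-! A Lawrence equivalence cannot separate points lying on a common hyperplane `H`, so it maps
`R ∩ H` into some hyperplane `H'`. If the points of `R ∩ H` that it fixes affinely span `H`,
then `H'` contains them, hence `H' = H`. For `Q³` this pins down, in turn: the coordinate `±1`
on the facet planes `xᵢ = ±1` (through four cube vertices); the relations `xⱼ = ±xₖ` on the
diagonal planes through the origin and two vertices, and with them the face centres `±eᵢ`;
the coordinate `0` on the planes `xᵢ = 0` (through the origin and two face centres). -/

theorem vectorSpan_le_orthogonal_span_singleton {E : Type*} [NormedAddCommGroup E]
    [InnerProductSpace ℝ E] {s : Set E} {c : E} {a : ℝ} (hs : ∀ p ∈ s, ⟪c, p⟫ = a) :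
    vectorSpan ℝ s ≤ (ℝ ∙ c)ᗮ := by
  rw [vectorSpan_def, Submodule.span_le]
  rintro _ ⟨p, hp, q, hq, rfl⟩
  simp [Submodule.mem_orthogonal_singleton_iff_inner_right, inner_sub_right, hs p hp, hs q hq]

theorem not_collinear_of_minor_ne {n : ℕ} {p q r : ESp n} (i j : Fin n)
    (h : (q i - p i) * (r j - p j) ≠ (q j - p j) * (r i - p i)) :
    ¬Collinear ℝ {p, q, r} := by
  rw [collinear_iff_of_mem (Set.mem_insert p _)]
  rintro ⟨v, hv⟩
  obtain ⟨t, rfl⟩ := hv q (by simp)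
  obtain ⟨u, rfl⟩ := hv r (by simp)
  apply h
  simp only [vadd_eq_add, PiLp.add_apply, PiLp.smul_apply, smul_eq_mul, add_sub_cancel_right]
  ring

namespace LawrenceEquivConfig

variable {n : ℕ} {R R' : Set (ESp n)} {φ : ESp n → ESp n}

theorem exists_inner_apply_eq (hL : LawrenceEquivConfig R R' φ) {c : ESp n} (hc : c ≠ 0)
    (a : ℝ) : ∃ c' : ESp n, ∃ a' : ℝ, c' ≠ 0 ∧ ∀ x ∈ R, ⟪c, x⟫ = a → ⟪c', φ x⟫ = a' := by
  obtain ⟨hbij, h⟩ := hL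
  obtain ⟨c', a', hc', hpos, hneg⟩ := h c a hc
  refine ⟨c', a', hc', fun x hx hxa => ?_⟩
  rcases lt_trichotomy ⟪c', φ x⟫ a' with hlt | heq | hgt
  · obtain ⟨y, ⟨hy, hya⟩, hyx⟩ := hneg.ge ⟨hbij.mapsTo hx, hlt⟩
    exact absurd (hbij.injOn hy hx hyx ▸ hya) hxa.not_lt
  · exact heq
  · obtain ⟨y, ⟨hy, hya⟩, hyx⟩ := hpos.ge ⟨hbij.mapsTo hx, hgt⟩
    exact absurd (hbij.injOn hy hx hyx ▸ hya) hxa.not_gt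

theorem inner_apply_eq_of_finrank_vectorSpan (hL : LawrenceEquivConfig R R' φ) {c : ESp n}
    (hc : c ≠ 0) {a : ℝ} {F : Set (ESp n)} (hF : F ⊆ {y ∈ R | φ y = y ∧ ⟪c, y⟫ = a})
    (hFne : F.Nonempty) (hdim : n ≤ Module.finrank ℝ (vectorSpan ℝ F) + 1) {x : ESp n}
    (hx : x ∈ R) (hxa : ⟪c, x⟫ = a) : ⟪c, φ x⟫ = a := by
  obtain ⟨c', a', hc', hmaps⟩ := hL.exists_inner_apply_eq hc a
  have hFc' : ∀ p ∈ F, ⟪c', p⟫ = a' := fun p hp => by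
    obtain ⟨hpR, hφp, hpa⟩ := hF hp
    simpa [hφp] using hmaps p hpR hpa
  have hspan : vectorSpan ℝ F = (ℝ ∙ c')ᗮ := by
    refine Submodule.eq_of_le_of_finrank_le (vectorSpan_le_orthogonal_span_singleton hFc') ?_
    have := Submodule.finrank_add_finrank_orthogonal (ℝ ∙ c')
    rw [finrank_span_singleton hc', finrank_euclideanSpace_fin] at this
    omega
  obtain ⟨p, hp⟩ := hFne
  have hφx : φ x - p ∈ vectorSpan ℝ F := by
    rw [hspan, Submodule.mem_orthogonal_singleton_iff_inner_right, inner_sub_right,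
      hmaps x hx hxa, hFc' p hp, sub_self]
  have := vectorSpan_le_orthogonal_span_singleton (fun y hy => (hF hy).2.2) hφx
  rwa [Submodule.mem_orthogonal_singleton_iff_inner_right, inner_sub_right, (hF hp).2.2,
    sub_eq_zero] at this

theorem inner_apply_eq_of_not_collinear {R R' : Set (ESp 3)} {φ : ESp 3 → ESp 3}
    (hL : LawrenceEquivConfig R R' φ) {c : ESp 3} (hc : c ≠ 0) {a : ℝ} {p q r : ESp 3}
    (hpqr : {p, q, r} ⊆ {y ∈ R | φ y = y ∧ ⟪c, y⟫ = a}) (hcol : ¬Collinear ℝ {p, q, r})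
    {x : ESp 3} (hx : x ∈ R) (hxa : ⟪c, x⟫ = a) : ⟪c, φ x⟫ = a := by
  refine hL.inner_apply_eq_of_finrank_vectorSpan hc hpqr ⟨p, Set.mem_insert p _⟩ ?_ hx hxa
  rw [collinear_iff_finrank_le_one] at hcol
  omega

end LawrenceEquivConfig

def cubeLattice (n : ℕ) : Set (ESp n) := {v | ∀ i, v i = -1 ∨ v i = 0 ∨ v i = 1}

def cubeVertices (n : ℕ) : Set (ESp n) := {v | ∀ i, v i = -1 ∨ v i = 1}

theorem cubeVertices_subset_cubeLattice (n : ℕ) : cubeVertices n ⊆ cubeLattice n :=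
  fun _ hv i => (hv i).imp_right Or.inr

theorem zero_mem_cubeLattice (n : ℕ) : 0 ∈ cubeLattice n :=
  fun _ => Or.inr (Or.inl rfl)

theorem single_mem_cubeLattice {n : ℕ} (i : Fin n) {s : ℝ} (hs : s = -1 ∨ s = 1) :
    EuclideanSpace.single i s ∈ cubeLattice n := by
  intro j
  rw [PiLp.single_apply]
  split_ifs
  exacts [hs.imp_right Or.inr, Or.inr (Or.inl rfl)]

theorem Fin.exists_ne_ne_three (i j : Fin 3) : ∃ k, k ≠ i ∧ k ≠ j := by
  revert i j; decide

theorem Fin.exists_pair_ne_three (i : Fin 3) : ∃ j k, j ≠ i ∧ k ≠ i ∧ j ≠ k := by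
  revert i; decide

namespace LawrenceEquivConfig

variable {R' : Set (ESp 3)} {φ : ESp 3 → ESp 3}

theorem mem_fixed_of_mem_cubeVertices (hW : ∀ q ∈ cubeVertices 3 ∪ {0}, φ q = q)
    {c v : ESp 3} {a : ℝ} (hv : v ∈ cubeVertices 3) (hva : ⟪c, v⟫ = a) :
    v ∈ {y ∈ cubeLattice 3 | φ y = y ∧ ⟪c, y⟫ = a} :=
  ⟨cubeVertices_subset_cubeLattice 3 hv, hW v (Or.inl hv), hva⟩

theorem cubeLattice_apply_coord_of_facet (hL : LawrenceEquivConfig (cubeLattice 3) R' φ)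
    (hW : ∀ q ∈ cubeVertices 3 ∪ {0}, φ q = q) {s : ℝ} (hs : s = -1 ∨ s = 1) {i : Fin 3}
    {x : ESp 3} (hx : x ∈ cubeLattice 3) (hxi : x i = s) : φ x i = s := by
  obtain ⟨j, k, hji, hki, hjk⟩ := Fin.exists_pair_ne_three i
  have key := hL.inner_apply_eq_of_not_collinear (c := EuclideanSpace.single i 1) (a := s)
    (by simp) (p := WithLp.toLp 2 fun m => if m = i then s else 1)
    (q := WithLp.toLp 2 fun m => if m = i then s else if m = j then -1 else 1)
    (r := WithLp.toLp 2 fun m => if m = i then s else if m = k then -1 else 1) ?_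
    (not_collinear_of_minor_ne j k (by simp [hji, hki, hjk, hjk.symm]; norm_num)) hx
    (by simpa [EuclideanSpace.inner_single_left] using hxi)
  · simpa [EuclideanSpace.inner_single_left] using key
  · simp only [Set.insert_subset_iff, Set.singleton_subset_iff]
    refine ⟨mem_fixed_of_mem_cubeVertices hW ?_ ?_, mem_fixed_of_mem_cubeVertices hW ?_ ?_,
      mem_fixed_of_mem_cubeVertices hW ?_ ?_⟩ <;>
    first
    | simp [EuclideanSpace.inner_single_left]
    | intro m; dsimp only; split_ifs <;> simp [hs]

theorem cubeLattice_apply_coord_of_diagonal (hL : LawrenceEquivConfig (cubeLattice 3) R' φ)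
    (hW : ∀ q ∈ cubeVertices 3 ∪ {0}, φ q = q) {e : ℝ} (he : e = -1 ∨ e = 1) {j k : Fin 3}
    (hjk : j ≠ k) {x : ESp 3} (hx : x ∈ cubeLattice 3) (hxjk : x j = e * x k) :
    φ x j = e * φ x k := by
  obtain ⟨l, hlj, hlk⟩ := Fin.exists_ne_ne_three j k
  have key := hL.inner_apply_eq_of_not_collinear
    (c := EuclideanSpace.single j 1 - EuclideanSpace.single k e) (a := 0)
    (fun h => by simpa [hjk] using congrArg (· j) h) (p := 0)
    (q := WithLp.toLp 2 fun m => if m = j then e else 1)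
    (r := WithLp.toLp 2 fun m => if m = j then e else if m = k then 1 else -1) ?_
    (not_collinear_of_minor_ne k l (by simp [hjk.symm, hlj, hlk]; norm_num)) hx
    (by simp [inner_sub_left, EuclideanSpace.inner_single_left, hxjk])
  · simp only [inner_sub_left, EuclideanSpace.inner_single_left, Real.ringHom_apply, one_mul]
      at key
    linarith
  · simp only [Set.insert_subset_iff, Set.singleton_subset_iff]
    refine ⟨⟨zero_mem_cubeLattice 3, hW 0 (Or.inr rfl), inner_zero_right _⟩,
      mem_fixed_of_mem_cubeVertices hW ?_ ?_, mem_fixed_of_mem_cubeVertices hW ?_ ?_⟩ <;>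
    first
    | simp [inner_sub_left, EuclideanSpace.inner_single_left, hjk.symm]
    | intro m; dsimp only; split_ifs <;> simp [he]

theorem cubeLattice_apply_single (hL : LawrenceEquivConfig (cubeLattice 3) R' φ)
    (hW : ∀ q ∈ cubeVertices 3 ∪ {0}, φ q = q) (i : Fin 3) {s : ℝ} (hs : s = -1 ∨ s = 1) :
    φ (EuclideanSpace.single i s) = EuclideanSpace.single i s := by
  have hmem := single_mem_cubeLattice i hs
  ext m
  by_cases hmi : m = i
  · subst hmi
    simpa using cubeLattice_apply_coord_of_facet hL hW hs hmem (by simp)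
  · obtain ⟨l, hlm, hli⟩ := Fin.exists_ne_ne_three m i
    have hpos := cubeLattice_apply_coord_of_diagonal hL hW (e := 1) (by norm_num) hlm.symm hmem
      (by simp [hmi, hli])
    have hneg := cubeLattice_apply_coord_of_diagonal hL hW (e := -1) (by norm_num) hlm.symm hmem
      (by simp [hmi, hli])
    simp only [PiLp.single_apply, hmi, if_false]
    linarith

theorem cubeLattice_apply_coord_of_coordinatePlane
    (hL : LawrenceEquivConfig (cubeLattice 3) R' φ) (hW : ∀ q ∈ cubeVertices 3 ∪ {0}, φ q = q)
    {i : Fin 3} {x : ESp 3} (hx : x ∈ cubeLattice 3) (hxi : x i = 0) : φ x i = 0 := by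
  obtain ⟨j, k, hji, hki, hjk⟩ := Fin.exists_pair_ne_three i
  have key := hL.inner_apply_eq_of_not_collinear (c := EuclideanSpace.single i 1) (a := 0)
    (by simp) (p := 0) (q := EuclideanSpace.single j 1) (r := EuclideanSpace.single k 1) ?_
    (not_collinear_of_minor_ne j k (by simp [hjk, hjk.symm])) hx
    (by simpa [EuclideanSpace.inner_single_left] using hxi)
  · simpa [EuclideanSpace.inner_single_left] using key
  · simp only [Set.insert_subset_iff, Set.singleton_subset_iff]
    refine ⟨⟨zero_mem_cubeLattice 3, hW 0 (Or.inr rfl), inner_zero_right _⟩,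
      ⟨single_mem_cubeLattice j (Or.inr rfl), cubeLattice_apply_single hL hW j (Or.inr rfl), ?_⟩,
      ⟨single_mem_cubeLattice k (Or.inr rfl), cubeLattice_apply_single hL hW k (Or.inr rfl), ?_⟩⟩
    <;> simp [EuclideanSpace.inner_single_left, hji, hki]

end LawrenceEquivConfig

/-- `Q³ = {-1, 0, 1}³` is framed by the vertices of the cube `[-1, 1]³` together with the
origin. -/
theorem cubeLattice_three_framed :
    FramedBy {v : ESp 3 | ∀ i, v i = -1 ∨ v i = 0 ∨ v i = 1}
      ({v : ESp 3 | ∀ i, v i = -1 ∨ v i = 1} ∪ {0}) := by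
  refine ⟨?_, fun R' φ hL hW x hx => ?_⟩
  · rintro v (hv | rfl)
    exacts [cubeVertices_subset_cubeLattice 3 hv, zero_mem_cubeLattice 3]
  · ext i
    rcases hx i with h | h | h <;> rw [h]
    · exact hL.cubeLattice_apply_coord_of_facet hW (Or.inl rfl) hx h
    · exact hL.cubeLattice_apply_coord_of_coordinatePlane hW hx h
    · exact hL.cubeLattice_apply_coord_of_facet hW (Or.inr rfl) hx h
end
end

section
/- Let d ≥ 3 and let p = (p₁, …, p_d) ∈ ℝ^d have all coordinates strictly positive. Then the point configuration G(p) = {(p₁x₁/2, …, p_d x_d/2) : x ∈ {0, 1, 2}^d} in ℝ^d contains p and is framed by the set L(p) = {0, p₁e₁, …, p_d e_d, (p₁/2)e₁, …, (p_d/2)e_d}. -/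
open scoped RealInnerProductSpace

noncomputable section

/-!
A Lawrence equivalence `φ` maps the points of `G(p)` on a hyperplane `H` exactly onto the
points on an image hyperplane `H'`. If `H` passes through enough points fixed by `φ`, these
pin `H'` down, and evaluating `H'` at the image of another point of `G(p) ∩ H` constrains that
image. The coordinate hyperplanes through `0` show that `φ` preserves supports. The hyperplanes
`∑ xₘ/pₘ = 1` and `∑_{m ≠ i} 2xₘ/pₘ = 1` then give linear relations between the coordinates of
the images of the points `(pᵢeᵢ + pⱼeⱼ)/2`, which force these points to be fixed as soon as
there are three coordinates. They make `xᵢ = pᵢ/2` a hyperplane pinned by fixed points; one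
more hyperplane fixes the points `pᵢeᵢ + (pⱼ/2)eⱼ`, which do the same for `xᵢ = pᵢ`. Hence
`φ` preserves every coordinate of every point of `G(p)`.
-/

open EuclideanSpace

theorem LawrenceEquivConfig.exists_inner_eq_iff {n : ℕ} {R R' : Set (ESp n)}
    {φ : ESp n → ESp n} (hφ : LawrenceEquivConfig R R' φ) {c : ESp n} (hc : c ≠ 0) (a : ℝ) :
    ∃ (c' : ESp n) (a' : ℝ), c' ≠ 0 ∧ ∀ x ∈ R, ⟪c', φ x⟫ = a' ↔ ⟪c, x⟫ = a := by
  obtain ⟨hbij, hsides⟩ := hφ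
  obtain ⟨c', a', hc', hplus, hminus⟩ := hsides c a hc
  refine ⟨c', a', hc', fun x hx => ⟨fun h => ?_, fun h => ?_⟩⟩
  · rcases lt_trichotomy ⟪c, x⟫ a with hlt | heq | hgt
    · have : φ x ∈ R' ∩ {y | ⟪c', y⟫ < a'} := hminus ▸ Set.mem_image_of_mem φ ⟨hx, hlt⟩
      exact absurd h this.2.ne
    · exact heq
    · have : φ x ∈ R' ∩ {y | a' < ⟪c', y⟫} := hplus ▸ Set.mem_image_of_mem φ ⟨hx, hgt⟩
      exact absurd h this.2.ne'
  · rcases lt_trichotomy ⟪c', φ x⟫ a' with hlt | heq | hgt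
    · have : φ x ∈ φ '' (R ∩ {y | ⟪c, y⟫ < a}) := hminus ▸ ⟨hbij.mapsTo hx, hlt⟩
      obtain ⟨y, ⟨hy, hya⟩, hyx⟩ := this
      exact absurd (hbij.injOn hy hx hyx ▸ hya : ⟪c, x⟫ < a) h.not_lt
    · exact heq
    · have : φ x ∈ φ '' (R ∩ {y | a < ⟪c, y⟫}) := hplus ▸ ⟨hbij.mapsTo hx, hgt⟩
      obtain ⟨y, ⟨hy, hya⟩, hyx⟩ := this
      exact absurd (hbij.injOn hy hx hyx ▸ hya : a < ⟪c, x⟫) h.not_gt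

theorem EuclideanSpace.eq_single_of_apply_eq_zero {ι : Type*} [Fintype ι] [DecidableEq ι]
    {v : EuclideanSpace ℝ ι} {i : ι} (hv : ∀ m ≠ i, v m = 0) : v = single i (v i) := by
  ext m
  by_cases hm : m = i
  · simp [hm]
  · simp [hm, hv m hm]

theorem LawrenceEquivConfig.apply_eq_iff_of_fixed {n : ℕ} {R R' : Set (ESp n)}
    {φ : ESp n → ESp n} (hφ : LawrenceEquivConfig R R' φ) {i : Fin n} {z : ESp n}
    (hz : z ∈ R) (hfz : φ z = z)
    (hstep : ∀ m ≠ i, ∃ s ≠ 0, z + single m s ∈ R ∧ φ (z + single m s) = z + single m s)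
    {x : ESp n} (hx : x ∈ R) : φ x i = z i ↔ x i = z i := by
  have hcoord : ∀ y : ESp n, ⟪single i 1, y⟫ = y i := fun y => by simp [inner_single_left]
  obtain ⟨c', a', hc', hH⟩ := hφ.exists_inner_eq_iff (c := single i 1) (by simp) (z i)
  have hz' : ⟪c', z⟫ = a' := hfz ▸ (hH z hz).2 (hcoord z)
  have hc'_eq : c' = single i (c' i) := by
    refine eq_single_of_apply_eq_zero fun m hm => ?_
    obtain ⟨s, hs, hmem, hfix⟩ := hstep m hm
    have h := (hH _ hmem).2 (by simp [hcoord, hm])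
    rw [hfix, inner_add_right, hz', inner_single_right] at h
    simpa [hs] using h
  have hci : c' i ≠ 0 := fun h => hc' (by rw [hc'_eq, h]; simp)
  have hc'_inner : ∀ y : ESp n, ⟪c', y⟫ = c' i * y i := fun y => by
    rw [hc'_eq, inner_single_left]; simp
  rw [← hcoord x, ← (hH x hx), ← hz', hc'_inner, hc'_inner, mul_right_inj' hci]

namespace ScaledCube

variable {d : ℕ} {p : ESp d}

def grid (p : ESp d) : Set (ESp d) := {g | ∀ i, g i = 0 ∨ g i = p i / 2 ∨ g i = p i}

structure FixesFrame (p : ESp d) (φ : ESp d → ESp d) : Prop where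
  zero : φ 0 = 0
  single_full : ∀ i, φ (single i (p i)) = single i (p i)
  single_half : ∀ i, φ (single i (p i / 2)) = single i (p i / 2)

def halfPair (p : ESp d) (i j : Fin d) : ESp d := single i (p i / 2) + single j (p j / 2)

theorem halfPair_comm (p : ESp d) (i j : Fin d) : halfPair p i j = halfPair p j i :=
  add_comm _ _

def fullHalf (p : ESp d) (i j : Fin d) : ESp d := single i (p i) + single j (p j / 2)

theorem grid_eq (hp : ∀ i, p i ≠ 0) :
    {y : ESp d | ∃ x : Fin d → ℝ, (∀ i, x i = 0 ∨ x i = 1 ∨ x i = 2) ∧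
      ∀ i, y i = p i * x i / 2} = grid p := by
  ext y
  constructor
  · rintro ⟨x, hx, hy⟩ i
    rcases hx i with h | h | h <;> simp [hy i, h]
  · intro hy
    refine ⟨fun i => 2 * y i / p i, fun i => ?_, fun i => by field_simp [hp i]⟩
    rcases hy i with h | h | h <;> simp only [h] <;> field_simp [hp i] <;> norm_num

theorem zero_mem_grid : (0 : ESp d) ∈ grid p := fun _ => Or.inl rfl

theorem single_mem_grid {i : Fin d} {s : ℝ} (hs : s = 0 ∨ s = p i / 2 ∨ s = p i) :
    single i s ∈ grid p := by
  intro m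
  by_cases hm : m = i
  · subst hm; simpa using hs
  · simp [hm]

theorem single_add_single_mem_grid {i j : Fin d} (hij : i ≠ j) {s t : ℝ}
    (hs : s = 0 ∨ s = p i / 2 ∨ s = p i) (ht : t = 0 ∨ t = p j / 2 ∨ t = p j) :
    single i s + single j t ∈ grid p := by
  intro m
  by_cases hmi : m = i
  · subst hmi; simpa [hij] using hs
  by_cases hmj : m = j
  · subst hmj; simpa [hmi] using ht
  · simp [hmi, hmj]

theorem halfPair_mem_grid {i j : Fin d} (hij : i ≠ j) : halfPair p i j ∈ grid p :=
  single_add_single_mem_grid hij (by simp) (by simp)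

theorem fullHalf_mem_grid {i j : Fin d} (hij : i ≠ j) : fullHalf p i j ∈ grid p :=
  single_add_single_mem_grid hij (by simp) (by simp)

section Lawrence

variable {R' : Set (ESp d)} {φ : ESp d → ESp d}

theorem apply_eq_zero_iff (hp : ∀ i, p i ≠ 0) (hφ : LawrenceEquivConfig (grid p) R' φ)
    (hfix : FixesFrame p φ) {g : ESp d} (hg : g ∈ grid p) (i : Fin d) :
    φ g i = 0 ↔ g i = 0 := by
  have h := hφ.apply_eq_iff_of_fixed (i := i) zero_mem_grid hfix.zero
    (fun m _ => ⟨p m, hp m, by simpa using single_mem_grid (by simp),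
      by simpa using hfix.single_full m⟩) hg
  simpa using h

theorem apply_eq_single_add_single (hp : ∀ i, p i ≠ 0)
    (hφ : LawrenceEquivConfig (grid p) R' φ) (hfix : FixesFrame p φ) {g : ESp d}
    (hg : g ∈ grid p) {i j : Fin d} (hij : i ≠ j)
    (hsupp : ∀ m, m ≠ i → m ≠ j → g m = 0) :
    φ g = single i (φ g i) + single j (φ g j) := by
  ext m
  by_cases hmi : m = i
  · subst hmi; simp [hij]
  by_cases hmj : m = j
  · subst hmj; simp [hmi]
  · simp [hmi, hmj, (apply_eq_zero_iff hp hφ hfix hg m).2 (hsupp m hmi hmj)]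

theorem apply_halfPair_eq_single_add_single (hp : ∀ i, p i ≠ 0)
    (hφ : LawrenceEquivConfig (grid p) R' φ) (hfix : FixesFrame p φ) {i j : Fin d}
    (hij : i ≠ j) :
    φ (halfPair p i j) = single i (φ (halfPair p i j) i) + single j (φ (halfPair p i j) j) :=
  apply_eq_single_add_single hp hφ hfix (halfPair_mem_grid hij) hij
    (fun m hmi hmj => by simp [halfPair, hmi, hmj])

theorem apply_halfPair_div_add_div (hp : ∀ i, p i ≠ 0)
    (hφ : LawrenceEquivConfig (grid p) R' φ) (hfix : FixesFrame p φ) {i j : Fin d}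
    (hij : i ≠ j) : φ (halfPair p i j) i / p i + φ (halfPair p i j) j / p j = 1 := by
  set c : ESp d := WithLp.toLp 2 fun m => 1 / p m
  have hc : c ≠ 0 := fun h => by simpa [c, hp i] using congrArg (· i) h
  obtain ⟨c', a', hc', hH⟩ := hφ.exists_inner_eq_iff hc 1
  have hfull : ∀ m, c' m = a' / p m := fun m => by
    have h := (hH _ (single_mem_grid (i := m) (s := p m) (by simp))).2
      (by simp [c, inner_single_right, hp m])
    rw [hfix.single_full, inner_single_right] at h
    simp only [conj_trivial] at h
    rw [eq_div_iff (hp m)]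
    linear_combination h
  have ha' : a' ≠ 0 := fun h => hc' (by ext m; simp [hfull, h])
  have h := (hH _ (halfPair_mem_grid hij)).2
    (by simp [c, halfPair, inner_add_right, inner_single_right]; field_simp [hp i, hp j]; ring)
  rw [apply_halfPair_eq_single_add_single hp hφ hfix hij, inner_add_right, inner_single_right,
    inner_single_right, hfull, hfull] at h
  simp only [conj_trivial] at h
  exact mul_left_cancel₀ ha' (by linear_combination h)

theorem apply_halfPair_apply_eq (hp : ∀ i, p i ≠ 0)
    (hφ : LawrenceEquivConfig (grid p) R' φ) (hfix : FixesFrame p φ) {i j k : Fin d}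
    (hji : j ≠ i) (hki : k ≠ i) : φ (halfPair p i j) i = φ (halfPair p i k) i := by
  set c : ESp d := WithLp.toLp 2 fun m => if m = i then 0 else 2 / p m
  have hc : c ≠ 0 := fun h => by simpa [c, hji, hp j] using congrArg (· j) h
  obtain ⟨c', a', hc', hH⟩ := hφ.exists_inner_eq_iff hc 1
  have hhalf : ∀ m ≠ i, c' m = 2 * a' / p m := fun m hm => by
    have h := (hH _ (single_mem_grid (i := m) (s := p m / 2) (by simp))).2
      (by simp [c, inner_single_right, hm]; field_simp [hp m])
    rw [hfix.single_half, inner_single_right] at h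
    simp only [conj_trivial] at h
    rw [eq_div_iff (hp m)]
    linear_combination 2 * h
  have key : ∀ l ≠ i, φ (halfPair p i l) i * (c' i - 2 * a' / p i) = -a' := fun l hl => by
    have h := (hH _ (halfPair_mem_grid hl.symm)).2
      (by simp [c, halfPair, inner_add_right, inner_single_right, hl]; field_simp [hp l])
    rw [apply_halfPair_eq_single_add_single hp hφ hfix hl.symm, inner_add_right,
      inner_single_right, inner_single_right, hhalf l hl] at h
    simp only [conj_trivial] at h
    linear_combination h - 2 * a' * apply_halfPair_div_add_div hp hφ hfix hl.symm
  have ha' : a' ≠ 0 := by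
    intro ha
    have hci : c' i ≠ 0 := fun h0 => hc' (by
      ext m
      by_cases hm : m = i
      · simp [hm, h0]
      · simp [hhalf m hm, ha])
    have hX : φ (halfPair p i j) i = 0 := by simpa [ha, hci] using key j hji
    simpa [halfPair, hji, hp i] using
      (apply_eq_zero_iff hp hφ hfix (halfPair_mem_grid hji.symm) i).1 hX
  have hκ : c' i - 2 * a' / p i ≠ 0 := fun h0 => ha' (by simpa [h0] using (key j hji).symm)
  exact mul_right_cancel₀ hκ ((key j hji).trans (key k hki).symm)

theorem apply_halfPair_apply_left (hd : 3 ≤ d) (hp : ∀ i, p i ≠ 0)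
    (hφ : LawrenceEquivConfig (grid p) R' φ) (hfix : FixesFrame p φ) {i j : Fin d}
    (hij : i ≠ j) : φ (halfPair p i j) i = p i / 2 := by
  obtain ⟨k, hki, hkj⟩ := Fin.exists_ne_and_ne_of_two_lt i j hd
  have hsum : ∀ {a b : Fin d}, a ≠ b →
      φ (halfPair p a b) a / p a + φ (halfPair p b a) b / p b = 1 := fun hab => by
    simpa [halfPair_comm p _ _] using apply_halfPair_div_add_div hp hφ hfix hab
  have hik := hsum hki.symm
  have hjk := hsum hkj.symm
  rw [apply_halfPair_apply_eq hp hφ hfix hki hij.symm] at hik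
  rw [apply_halfPair_apply_eq hp hφ hfix hkj hij,
    apply_halfPair_apply_eq hp hφ hfix hkj.symm hki.symm] at hjk
  have hij' := hsum hij
  have hhalf : φ (halfPair p i j) i / p i = 1 / 2 := by linarith
  linarith [(div_eq_iff (hp i)).1 hhalf]

theorem apply_halfPair (hd : 3 ≤ d) (hp : ∀ i, p i ≠ 0)
    (hφ : LawrenceEquivConfig (grid p) R' φ) (hfix : FixesFrame p φ) {i j : Fin d}
    (hij : i ≠ j) : φ (halfPair p i j) = halfPair p i j := by
  have hj := apply_halfPair_apply_left hd hp hφ hfix hij.symm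
  rw [← halfPair_comm] at hj
  rw [apply_halfPair_eq_single_add_single hp hφ hfix hij,
    apply_halfPair_apply_left hd hp hφ hfix hij, hj]
  rfl

theorem apply_eq_half_iff (hd : 3 ≤ d) (hp : ∀ i, p i ≠ 0)
    (hφ : LawrenceEquivConfig (grid p) R' φ) (hfix : FixesFrame p φ) {g : ESp d}
    (hg : g ∈ grid p) (i : Fin d) : φ g i = p i / 2 ↔ g i = p i / 2 := by
  have h := hφ.apply_eq_iff_of_fixed (i := i) (single_mem_grid (by simp)) (hfix.single_half i)
    (fun m hm => ⟨p m / 2, by simp [hp m], halfPair_mem_grid hm.symm,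
      apply_halfPair hd hp hφ hfix hm.symm⟩) hg
  simpa using h

theorem apply_fullHalf_apply_left (hd : 3 ≤ d) (hp : ∀ i, p i ≠ 0)
    (hφ : LawrenceEquivConfig (grid p) R' φ) (hfix : FixesFrame p φ) {i j : Fin d}
    (hij : i ≠ j) : φ (fullHalf p i j) i = p i := by
  obtain ⟨k, hki, hkj⟩ := Fin.exists_ne_and_ne_of_two_lt i j hd
  -- `c` makes `H` pass through `fullHalf p i j` and through the fixed points `pₘeₘ`
  -- (`m ≠ j, k`), `(pₖ/2)eₖ` and `halfPair p j k`, which determine `H'`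
  set c : ESp d :=
    WithLp.toLp 2 fun m => if m = j then 0 else if m = k then 2 / p k else 1 / p m
  have hc : c ≠ 0 := fun h => by simpa [c, hij, hki.symm, hp i] using congrArg (· i) h
  obtain ⟨c', a', hc', hH⟩ := hφ.exists_inner_eq_iff hc 1
  have hfull : ∀ m, m ≠ j → m ≠ k → c' m = a' / p m := fun m hmj hmk => by
    have h := (hH _ (single_mem_grid (i := m) (s := p m) (by simp))).2
      (by simp [c, inner_single_right, hmj, hmk, hp m])
    rw [hfix.single_full, inner_single_right] at h
    simp only [conj_trivial] at h
    rw [eq_div_iff (hp m)]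
    linear_combination h
  have hk : c' k = 2 * a' / p k := by
    have h := (hH _ (single_mem_grid (i := k) (s := p k / 2) (by simp))).2
      (by simp [c, inner_single_right, hkj]; field_simp [hp k])
    rw [hfix.single_half, inner_single_right] at h
    simp only [conj_trivial] at h
    rw [eq_div_iff (hp k)]
    linear_combination 2 * h
  have hj : c' j = 0 := by
    have h := (hH _ (halfPair_mem_grid hkj.symm)).2
      (by simp [c, halfPair, inner_add_right, inner_single_right, hkj]; field_simp [hp k])
    rw [apply_halfPair hd hp hφ hfix hkj.symm, halfPair, inner_add_right, inner_single_right,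
      inner_single_right, hk] at h
    simp only [conj_trivial] at h
    rw [show p k / 2 * (2 * a' / p k) = a' by field_simp [hp k]] at h
    simpa [hp j] using h
  have ha' : a' ≠ 0 := fun ha => hc' (by
    ext m
    by_cases hmj : m = j
    · simp [hmj, hj]
    by_cases hmk : m = k
    · simp [hmk, hk, ha]
    · simp [hfull m hmj hmk, ha])
  have h := (hH _ (fullHalf_mem_grid hij)).2
    (by simp [c, fullHalf, inner_add_right, inner_single_right, hij, hki.symm, hp i])
  rw [apply_eq_single_add_single hp hφ hfix (fullHalf_mem_grid hij) hij
    (fun m hmi hmj => by simp [fullHalf, hmi, hmj]), inner_add_right, inner_single_right,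
    inner_single_right, hj, hfull i hij hki.symm] at h
  simp only [conj_trivial, mul_zero, add_zero] at h
  rw [mul_div_assoc', div_eq_iff (hp i)] at h
  exact mul_left_cancel₀ ha' (by linear_combination h)

theorem apply_fullHalf (hd : 3 ≤ d) (hp : ∀ i, p i ≠ 0)
    (hφ : LawrenceEquivConfig (grid p) R' φ) (hfix : FixesFrame p φ) {i j : Fin d}
    (hij : i ≠ j) : φ (fullHalf p i j) = fullHalf p i j := by
  have hg := fullHalf_mem_grid (p := p) hij
  rw [apply_eq_single_add_single hp hφ hfix hg hij
      (fun m hmi hmj => by simp [fullHalf, hmi, hmj]),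
    apply_fullHalf_apply_left hd hp hφ hfix hij,
    (apply_eq_half_iff hd hp hφ hfix hg j).2 (by simp [fullHalf, hij])]
  rfl

theorem apply_eq_full_iff (hd : 3 ≤ d) (hp : ∀ i, p i ≠ 0)
    (hφ : LawrenceEquivConfig (grid p) R' φ) (hfix : FixesFrame p φ) {g : ESp d}
    (hg : g ∈ grid p) (i : Fin d) : φ g i = p i ↔ g i = p i := by
  have h := hφ.apply_eq_iff_of_fixed (i := i) (single_mem_grid (by simp)) (hfix.single_full i)
    (fun m hm => ⟨p m / 2, by simp [hp m], fullHalf_mem_grid hm.symm,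
      apply_fullHalf hd hp hφ hfix hm.symm⟩) hg
  simpa using h

theorem apply_eq_self (hd : 3 ≤ d) (hp : ∀ i, p i ≠ 0)
    (hφ : LawrenceEquivConfig (grid p) R' φ) (hfix : FixesFrame p φ) {g : ESp d}
    (hg : g ∈ grid p) : φ g = g := by
  ext i
  rcases hg i with h | h | h <;> rw [h]
  · exact (apply_eq_zero_iff hp hφ hfix hg i).2 h
  · exact (apply_eq_half_iff hd hp hφ hfix hg i).2 h
  · exact (apply_eq_full_iff hd hp hφ hfix hg i).2 h

end Lawrence

end ScaledCube

/-- For `p` in the positive orthant of `ℝ^d`, `d ≥ 3`, the configuration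
`G(p) = (D/2)(Q^d + 𝟏)` contains `p` and is framed by
`L(p) = {0, p₁e₁, …, p_d e_d, p₁e₁/2, …, p_d e_d/2}`. -/
theorem scaled_cube_framed
    (d : ℕ) (hd : 3 ≤ d) (p : ESp d) (hp : ∀ i, 0 < p i)
    (G L : Set (ESp d))
    (hG : G = {y | ∃ x : Fin d → ℝ,
      (∀ i, x i = 0 ∨ x i = 1 ∨ x i = 2) ∧ ∀ i, y i = p i * x i / 2})
    (hL : L = insert (0 : ESp d)
      ({q | ∃ i, q = EuclideanSpace.single i (p i)} ∪
       {q | ∃ i, q = EuclideanSpace.single i (p i / 2)})) :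
    p ∈ G ∧ FramedBy G L := by
  have hp' : ∀ i, p i ≠ 0 := fun i => (hp i).ne'
  subst hG hL
  rw [ScaledCube.grid_eq hp']
  refine ⟨fun i => Or.inr (Or.inr rfl), ?_, fun R' φ hφ hfix g hg => ?_⟩
  · rintro q (rfl | ⟨i, rfl⟩ | ⟨i, rfl⟩)
    exacts [ScaledCube.zero_mem_grid, ScaledCube.single_mem_grid (by simp),
      ScaledCube.single_mem_grid (by simp)]
  · refine ScaledCube.apply_eq_self hd hp' hφ ⟨?_, fun i => ?_, fun i => ?_⟩ hg <;> apply hfix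
    exacts [Or.inl rfl, Or.inr (Or.inl ⟨i, rfl⟩), Or.inr (Or.inr ⟨i, rfl⟩)]
end
end

section
/- For every polynomial ψ with integer coefficients, there exists a functional arrangement for the function ℝ → ℝ, x ↦ ψ(x). -/
open scoped RealInnerProductSpace

noncomputable section

/-!
A Lawrence equivalence maps the section of `R` by a hyperplane onto the section of `R'` by
another hyperplane. In the plane it therefore preserves collinearity and non-collinearity of
points of `R`, so a point of `R` cut out by two lines through points of `R` goes to the
intersection of the image lines. Once the frame `Q² + 𝟏` is fixed, von Staudt's constructions
for `v - u` and `u * v` (the latter brought back from the `y`-axis to the `x`-axis by the mirror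
symmetry of the frame) therefore move along with their inputs, and the functions admitting such
a construction form a subring of `ℝ → ℝ` containing the identity, hence every integer
polynomial. Collinearity with `(0, 0)` and `(1, 0)` keeps the input on the `x`-axis, at some
`(t', 0)`; the output then goes to `(ψ t', 0)`, so fixing it forces `ψ t' = ψ t`.
-/

namespace LawrenceEquivConfig

variable {n : ℕ} {R R' : Set (ESp n)} {φ : ESp n → ESp n}

theorem exists_hyperplane_iff (h : LawrenceEquivConfig R R' φ) {c : ESp n} (hc : c ≠ 0)
    (a : ℝ) : ∃ (c' : ESp n) (a' : ℝ), c' ≠ 0 ∧ ∀ x ∈ R, ⟪c', φ x⟫ = a' ↔ ⟪c, x⟫ = a := by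
  obtain ⟨c', a', hc', hpos, hneg⟩ := h.2 c a hc
  have transfer :
      ∀ {A B : Set (ESp n)}, φ '' (R ∩ A) = R' ∩ B → ∀ x ∈ R, φ x ∈ B ↔ x ∈ A :=
    fun {A B} hAB x hx => calc
      φ x ∈ B ↔ φ x ∈ R' ∩ B := by simp [h.1.mapsTo hx]
      _ ↔ φ x ∈ φ '' (R ∩ A) := by rw [hAB]
      _ ↔ x ∈ R ∩ A := h.1.injOn.mem_image_iff Set.inter_subset_left hx
      _ ↔ x ∈ A := by simp [hx]
  have eq_iff : ∀ {y b : ℝ}, y = b ↔ ¬ b < y ∧ ¬ y < b := by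
    intros; rw [le_antisymm_iff, not_lt, not_lt, and_comm]
  refine ⟨c', a', hc', fun x hx => ?_⟩
  have hp : a' < ⟪c', φ x⟫ ↔ a < ⟪c, x⟫ := transfer hpos x hx
  have hn : ⟪c', φ x⟫ < a' ↔ ⟪c, x⟫ < a := transfer hneg x hx
  rw [eq_iff, eq_iff, hp, hn]

theorem conj (h : LawrenceEquivConfig R R' φ) (e : ESp n ≃ₗᵢ[ℝ] ESp n) :
    LawrenceEquivConfig (e '' R) (e '' R') (e ∘ φ ∘ e.symm) := by
  have bij : Set.BijOn e.symm (e '' R) R := by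
    simpa [Set.image_image] using e.symm.toEquiv.bijOn_image (s := e '' R)
  refine ⟨(e.toEquiv.bijOn_image.comp h.1).comp bij, fun c a hc => ?_⟩
  obtain ⟨c', a', hc', hpos, hneg⟩ := h.2 (e.symm c) a (by simpa using hc)
  have image_inter : ∀ (S : Set (ESp n)) (P : ℝ → Prop) (c : ESp n),
      e '' S ∩ {x | P ⟪c, x⟫} = e '' (S ∩ {x | P ⟪e.symm c, x⟫}) := by
    intro S P c
    ext x
    constructor
    · rintro ⟨⟨y, hy, rfl⟩, hP⟩
      exact ⟨y, ⟨hy, by simpa [LinearIsometryEquiv.inner_map_eq_flip] using hP⟩, rfl⟩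
    · rintro ⟨y, ⟨hy, hP⟩, rfl⟩
      exact ⟨⟨y, hy, rfl⟩, by simpa [LinearIsometryEquiv.inner_map_eq_flip] using hP⟩
  refine ⟨e c', a', by simpa using hc', ?_, ?_⟩
  · rw [image_inter _ (a < ·), image_inter _ (a' < ·), LinearIsometryEquiv.symm_apply_apply, ← hpos,
      Set.image_comp, Set.image_comp]
    simp [Set.image_image]
  · rw [image_inter _ (· < a), image_inter _ (· < a'), LinearIsometryEquiv.symm_apply_apply, ← hneg,
      Set.image_comp, Set.image_comp]
    simp [Set.image_image]

end LawrenceEquivConfig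

def pt (a b : ℝ) : ESp 2 := !₂[a, b]

@[simp] theorem pt_apply_zero (a b : ℝ) : pt a b 0 = a := rfl

@[simp] theorem pt_apply_one (a b : ℝ) : pt a b 1 = b := rfl

theorem ext_iff_two {p q : ESp 2} : p = q ↔ p 0 = q 0 ∧ p 1 = q 1 := by
  rw [PiLp.ext_iff, Fin.forall_fin_two]

@[simp] theorem pt_inj {a b c d : ℝ} : pt a b = pt c d ↔ a = c ∧ b = d := ext_iff_two

theorem eq_pt (p : ESp 2) : p = pt (p 0) (p 1) := ext_iff_two.2 ⟨rfl, rfl⟩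

theorem inner_eq_two (x y : ESp 2) : ⟪x, y⟫ = x 0 * y 0 + x 1 * y 1 := by
  simp [PiLp.inner_apply, Fin.sum_univ_two, mul_comm]

theorem smul_e1 (t : ℝ) : t • e1 = pt t 0 := by
  simp [ext_iff_two, e1]

/-- `a`, `b`, `x` are collinear; always true when `a = b`. -/
def OnLine (a b x : ESp 2) : Prop :=
  (b 0 - a 0) * (x 1 - a 1) = (b 1 - a 1) * (x 0 - a 0)

@[simp] theorem onLine_pt {a b c d e f : ℝ} :
    OnLine (pt a b) (pt c d) (pt e f) ↔ (c - a) * (f - b) = (d - b) * (e - a) := Iff.rfl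

theorem onLine_self_left (a b : ESp 2) : OnLine a b a := by simp [OnLine]

theorem onLine_self_right (a b : ESp 2) : OnLine a b b := by simp [OnLine, mul_comm]

theorem onLine_iff_inner_eq {c u v : ESp 2} {β : ℝ} (hc : c ≠ 0) (hu : ⟪c, u⟫ = β)
    (hv : ⟪c, v⟫ = β) (huv : u ≠ v) (x : ESp 2) : OnLine u v x ↔ ⟪c, x⟫ = β := by
  rw [Ne, ext_iff_two, not_and_or] at hc huv
  rw [inner_eq_two] at hu hv ⊢
  simp only [PiLp.zero_apply] at hc
  have hcd : c 0 * (v 0 - u 0) + c 1 * (v 1 - u 1) = 0 := by linarith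
  have h₀ : c 0 * ((v 0 - u 0) * (x 1 - u 1) - (v 1 - u 1) * (x 0 - u 0))
      = -(v 1 - u 1) * (c 0 * x 0 + c 1 * x 1 - β) := by
    linear_combination (x 1 - u 1) * hcd + (v 1 - u 1) * hu
  have h₁ : c 1 * ((v 0 - u 0) * (x 1 - u 1) - (v 1 - u 1) * (x 0 - u 0))
      = (v 0 - u 0) * (c 0 * x 0 + c 1 * x 1 - β) := by
    linear_combination -(x 0 - u 0) * hcd - (v 0 - u 0) * hu
  rw [OnLine, ← sub_eq_zero, ← sub_eq_zero (b := β)]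
  constructor
  · intro h
    rw [h, mul_zero, eq_comm, mul_eq_zero] at h₀ h₁
    rcases huv with huv | huv
    · exact h₁.resolve_left (sub_ne_zero.2 (Ne.symm huv))
    · exact h₀.resolve_left (neg_ne_zero.2 (sub_ne_zero.2 (Ne.symm huv)))
  · intro h
    rw [h, mul_zero, mul_eq_zero] at h₀ h₁
    rcases hc with hc | hc
    · exact h₀.resolve_left hc
    · exact h₁.resolve_left hc

def lineNormal (a b : ESp 2) : ESp 2 := pt (a 1 - b 1) (b 0 - a 0)

theorem lineNormal_ne_zero {a b : ESp 2} (hab : a ≠ b) : lineNormal a b ≠ 0 := by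
  rw [Ne, ext_iff_two] at hab ⊢
  simp only [lineNormal, pt_apply_zero, pt_apply_one, PiLp.zero_apply, sub_eq_zero]
  tauto

theorem onLine_iff_inner_lineNormal (a b x : ESp 2) :
    OnLine a b x ↔ ⟪lineNormal a b, x⟫ = ⟪lineNormal a b, a⟫ := by
  simp only [OnLine, inner_eq_two, lineNormal, pt_apply_zero, pt_apply_one]
  constructor <;> intro h <;> linear_combination h

theorem eq_of_onLine {A B C D X E : ESp 2} (hAB : A ≠ B) (hCD : C ≠ D)
    (hnd : ¬ (OnLine A B C ∧ OnLine A B D)) (hX₁ : OnLine A B X) (hX₂ : OnLine C D X)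
    (hE₁ : OnLine A B E) (hE₂ : OnLine C D E) : X = E := by
  by_contra hXE
  have line_eq : ∀ {P Q : ESp 2}, P ≠ Q → OnLine P Q X → OnLine P Q E →
      ∀ Y, OnLine P Q Y ↔ OnLine X E Y :=
    fun {P Q} hPQ hX hE Y => by
      rw [onLine_iff_inner_lineNormal] at hX hE ⊢
      rw [onLine_iff_inner_eq (lineNormal_ne_zero hPQ) hX hE hXE]
  refine hnd ⟨?_, ?_⟩
  · rw [line_eq hAB hX₁ hE₁, ← line_eq hCD hX₂ hE₂]; exact onLine_self_left C D
  · rw [line_eq hAB hX₁ hE₁, ← line_eq hCD hX₂ hE₂]; exact onLine_self_right C D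

namespace LawrenceEquivConfig

variable {R R' : Set (ESp 2)} {φ : ESp 2 → ESp 2}

theorem onLine_iff (h : LawrenceEquivConfig R R' φ) {a b x : ESp 2} (ha : a ∈ R) (hb : b ∈ R)
    (hab : a ≠ b) (hx : x ∈ R) : OnLine (φ a) (φ b) (φ x) ↔ OnLine a b x := by
  obtain ⟨c, β, hc, hcβ⟩ := h.exists_hyperplane_iff (lineNormal_ne_zero hab) ⟪lineNormal a b, a⟫
  have image_line : ∀ {y}, y ∈ R → OnLine a b y → ⟪c, φ y⟫ = β := fun hy hy' =>
    (hcβ _ hy).2 ((onLine_iff_inner_lineNormal a b _).1 hy')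
  rw [onLine_iff_inner_eq hc (image_line ha (onLine_self_left a b))
      (image_line hb (onLine_self_right a b)) (fun he => hab (h.1.injOn ha hb he)),
    hcβ x hx, onLine_iff_inner_lineNormal]

theorem map_eq_of_onLine (h : LawrenceEquivConfig R R' φ) {a b c d p E : ESp 2} (ha : a ∈ R)
    (hb : b ∈ R) (hc : c ∈ R) (hd : d ∈ R) (hp : p ∈ R) (hab : a ≠ b) (hcd : c ≠ d)
    (hnd : ¬ (OnLine a b c ∧ OnLine a b d)) (hp₁ : OnLine a b p) (hp₂ : OnLine c d p)
    (hE₁ : OnLine (φ a) (φ b) E) (hE₂ : OnLine (φ c) (φ d) E) : φ p = E :=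
  eq_of_onLine (fun he => hab (h.1.injOn ha hb he)) (fun he => hcd (h.1.injOn hc hd he))
    (by rwa [h.onLine_iff ha hb hab hc, h.onLine_iff ha hb hab hd])
    ((h.onLine_iff ha hb hab hp).2 hp₁) ((h.onLine_iff hc hd hcd hp).2 hp₂) hE₁ hE₂

end LawrenceEquivConfig

theorem pt_mem_Qsq {a b : ℝ} (ha : a = 0 ∨ a = 1 ∨ a = 2) (hb : b = 0 ∨ b = 1 ∨ b = 2) :
    pt a b ∈ Qsq :=
  Fin.forall_fin_two.2 ⟨ha, hb⟩

theorem finite_Qsq : Qsq.Finite :=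
  (((Set.toFinite {0, 1, 2}).prod (Set.toFinite {0, 1, 2})).image
    fun p : ℝ × ℝ => pt p.1 p.2).subset
    fun q hq => ⟨(q 0, q 1), ⟨hq 0, hq 1⟩, (eq_pt q).symm⟩

def swapCoords : ESp 2 ≃ₗᵢ[ℝ] ESp 2 :=
  LinearIsometryEquiv.piLpCongrLeft 2 ℝ ℝ (Equiv.swap 0 1)

@[simp] theorem swapCoords_pt (a b : ℝ) : swapCoords (pt a b) = pt b a := by
  simp [swapCoords, ext_iff_two, Equiv.piCongrLeft']

@[simp] theorem swapCoords_swapCoords (p : ESp 2) : swapCoords (swapCoords p) = p := by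
  rw [eq_pt p, swapCoords_pt, swapCoords_pt]

@[simp] theorem swapCoords_symm : swapCoords.symm = swapCoords :=
  LinearIsometryEquiv.ext fun p => swapCoords.symm_apply_eq.2 (swapCoords_swapCoords p).symm

theorem swapCoords_mem_Qsq {q : ESp 2} (hq : q ∈ Qsq) : swapCoords q ∈ Qsq := by
  rw [eq_pt q, swapCoords_pt]
  exact pt_mem_Qsq (hq 1) (hq 0)

structure FramedLawrenceEquiv (R R' : Set (ESp 2)) (φ : ESp 2 → ESp 2) : Prop where
  lawrence : LawrenceEquivConfig R R' φ
  frame_subset : Qsq ⊆ R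
  map_frame : ∀ q ∈ Qsq, φ q = q

namespace FramedLawrenceEquiv

variable {R R' : Set (ESp 2)} {φ : ESp 2 → ESp 2}

theorem conj_swap (h : FramedLawrenceEquiv R R' φ) :
    FramedLawrenceEquiv (swapCoords '' R) (swapCoords '' R')
      (swapCoords ∘ φ ∘ swapCoords) where
  lawrence := by simpa only [swapCoords_symm] using h.lawrence.conj swapCoords
  frame_subset q hq :=
    ⟨swapCoords q, h.frame_subset (swapCoords_mem_Qsq hq), swapCoords_swapCoords q⟩
  map_frame q hq := by simp [h.map_frame _ (swapCoords_mem_Qsq hq)]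

theorem exists_map_pt_zero (h : FramedLawrenceEquiv R R' φ) {t : ℝ} (ht : pt t 0 ∈ R) :
    ∃ t', φ (pt t 0) = pt t' 0 := by
  have h₀ : pt 0 0 ∈ Qsq := pt_mem_Qsq (by norm_num) (by norm_num)
  have h₁ : pt 1 0 ∈ Qsq := pt_mem_Qsq (by norm_num) (by norm_num)
  have hcol := (h.lawrence.onLine_iff (h.frame_subset h₀) (h.frame_subset h₁) (by simp) ht).2
    (by simp)
  rw [h.map_frame _ h₀, h.map_frame _ h₁, eq_pt (φ _)] at hcol
  refine ⟨φ (pt t 0) 0, ?_⟩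
  rw [eq_pt (φ _), pt_inj]
  simpa using hcol

end FramedLawrenceEquiv

def Carries (R : Set (ESp 2)) (φ : ESp 2 → ESp 2) (t t' : ℝ) (g : ℝ → ESp 2) : Prop :=
  g t ∈ R ∧ φ (g t) = g t'

section Gadgets

variable {R R' : Set (ESp 2)} {φ : ESp 2 → ESp 2} {t t' : ℝ}

theorem carries_frame (hφ : FramedLawrenceEquiv R R' φ) (a b : ℝ)
    (ha : a = 0 ∨ a = 1 ∨ a = 2 := by norm_num) (hb : b = 0 ∨ b = 1 ∨ b = 2 := by norm_num) :
    Carries R φ t t' fun _ => pt a b :=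
  ⟨hφ.frame_subset (pt_mem_Qsq ha hb), hφ.map_frame _ (pt_mem_Qsq ha hb)⟩

theorem carries_of_onLine (hφ : FramedLawrenceEquiv R R' φ) {a b c d p : ℝ → ESp 2}
    (ha : Carries R φ t t' a) (hb : Carries R φ t t' b) (hc : Carries R φ t t' c)
    (hd : Carries R φ t t' d) (hp : p t ∈ R) (hab : a t ≠ b t) (hcd : c t ≠ d t)
    (hnd : ¬ (OnLine (a t) (b t) (c t) ∧ OnLine (a t) (b t) (d t)))
    (hp₁ : ∀ s, OnLine (a s) (b s) (p s)) (hp₂ : ∀ s, OnLine (c s) (d s) (p s)) :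
    Carries R φ t t' p :=
  ⟨hp, hφ.lawrence.map_eq_of_onLine ha.1 hb.1 hc.1 hd.1 hp hab hcd hnd (hp₁ t) (hp₂ t)
    (ha.2 ▸ hb.2 ▸ hp₁ t') (hc.2 ▸ hd.2 ▸ hp₂ t')⟩

theorem carries_comp_swap_iff {g : ℝ → ESp 2} :
    Carries R φ t t' (swapCoords ∘ g) ↔
      Carries (swapCoords '' R) (swapCoords ∘ φ ∘ swapCoords) t t' g := by
  simp only [Carries, Function.comp_apply, Set.mem_image]
  constructor
  · rintro ⟨hg, h⟩
    exact ⟨⟨_, hg, swapCoords_swapCoords _⟩, by rw [h, swapCoords_swapCoords]⟩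
  · rintro ⟨⟨q, hq, hqg⟩, h⟩
    rw [← hqg, swapCoords_swapCoords] at h ⊢
    exact ⟨hq, by rw [← h, swapCoords_swapCoords]⟩

/-- Subtraction: `(u/2, 1)` lies on the line through `(u, 0)` and `(0, 2)`, `(u - v, 2)` on the
line through `(v, 0)` and `(u/2, 1)`, and `(v - u, 0)` on the line through `(u - v, 2)` and
`(0, 1)`. -/
def subGadget (u v : ℝ → ℝ) : Set (ℝ → ESp 2) :=
  {fun s => pt (u s / 2) 1, fun s => pt (u s - v s) 2, fun s => pt (v s - u s) 0}

theorem finite_subGadget (u v : ℝ → ℝ) : (subGadget u v).Finite := by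
  unfold subGadget
  exact Set.toFinite _

theorem carries_subGadget (hφ : FramedLawrenceEquiv R R' φ) {u v : ℝ → ℝ}
    (hu : Carries R φ t t' fun s => pt (u s) 0) (hv : Carries R φ t t' fun s => pt (v s) 0)
    (hR : ∀ g ∈ subGadget u v, g t ∈ R) : ∀ g ∈ subGadget u v, Carries R φ t t' g := by
  simp only [subGadget, Set.mem_insert_iff, Set.mem_singleton_iff, forall_eq_or_imp,
    forall_eq] at hR ⊢
  obtain ⟨m₁, m₂, m₃⟩ := hR
  have h₁ : Carries R φ t t' fun s => pt (u s / 2) 1 :=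
    carries_of_onLine hφ hu (carries_frame hφ 0 2) (carries_frame hφ 0 1) (carries_frame hφ 1 1)
      m₁ (by simp) (by simp)
      (by simp only [onLine_pt]; intro h; linarith)
      (fun s => by simp only [onLine_pt]; ring) (fun s => by simp only [onLine_pt]; ring)
  have h₂ : Carries R φ t t' fun s => pt (u s - v s) 2 :=
    carries_of_onLine hφ h₁ hv (carries_frame hφ 0 2) (carries_frame hφ 1 2)
      m₂ (by simp) (by simp)
      (by simp only [onLine_pt]; intro h; linarith)
      (fun s => by simp only [onLine_pt]; ring) (fun s => by simp only [onLine_pt]; ring)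
  have h₃ : Carries R φ t t' fun s => pt (v s - u s) 0 :=
    carries_of_onLine hφ h₂ (carries_frame hφ 0 1) (carries_frame hφ 0 0) (carries_frame hφ 1 0)
      m₃ (by simp) (by simp)
      (by simp only [onLine_pt]; intro h; linarith)
      (fun s => by simp only [onLine_pt]; ring) (fun s => by simp only [onLine_pt]; ring)
  exact ⟨h₁, h₂, h₃⟩

theorem carries_sub (hφ : FramedLawrenceEquiv R R' φ) {u v : ℝ → ℝ}
    (hu : Carries R φ t t' fun s => pt (u s) 0) (hv : Carries R φ t t' fun s => pt (v s) 0)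
    (hR : ∀ g ∈ subGadget u v, g t ∈ R) :
    (Carries R φ t t' fun s => pt (u s - v s) 2) ∧ Carries R φ t t' fun s => pt (v s - u s) 0 :=
  ⟨carries_subGadget hφ hu hv hR _ (by simp [subGadget]),
    carries_subGadget hφ hu hv hR _ (by simp [subGadget])⟩

theorem carries_pt_one (hφ : FramedLawrenceEquiv R R' φ) {w : ℝ → ℝ}
    (h₀ : Carries R φ t t' fun s => pt (w s + 1) 0) (h₂ : Carries R φ t t' fun s => pt (w s - 1) 2)
    (hR : pt 1 (w t) ∈ R) : Carries R φ t t' fun s => pt 1 (w s) :=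
  carries_of_onLine hφ h₀ h₂ (carries_frame hφ 1 0) (carries_frame hφ 1 2) hR (by simp) (by simp)
    (by simp only [onLine_pt]; intro h; linarith)
    (fun s => by simp only [onLine_pt]; ring) (fun s => by simp only [onLine_pt]; ring)

theorem carries_pt_mul (hφ : FramedLawrenceEquiv R R' φ) {v w : ℝ → ℝ}
    (h₁ : Carries R φ t t' fun s => pt 1 (w s)) (h₀ : Carries R φ t t' fun s => pt (v s) 0)
    (h₂ : Carries R φ t t' fun s => pt (v s) 2) (hR : pt (v t) (w t * v t) ∈ R) :
    Carries R φ t t' fun s => pt (v s) (w s * v s) :=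
  carries_of_onLine hφ (carries_frame hφ 0 0) h₁ h₀ h₂ hR (by simp) (by simp)
    (by simp only [onLine_pt]; intro h; linarith)
    (fun s => by simp only [onLine_pt]; ring) (fun s => by simp only [onLine_pt]; ring)

theorem carries_pt_zero_mul (hφ : FramedLawrenceEquiv R R' φ) {u v : ℝ → ℝ}
    (hpos : Carries R φ t t' fun s => pt (v s) (u s * v s))
    (hneg : Carries R φ t t' fun s => pt (-v s) (u s * v s))
    (hv : Carries R φ t t' fun s => pt (v s) 0) (hR : pt 0 (u t * v t) ∈ R) :
    Carries R φ t t' fun s => pt 0 (u s * v s) := by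
  -- For `v t = 0` the points `(±v, uv)` coincide, but the output is then the fixed origin.
  by_cases hvt : v t = 0
  · have h₀ : φ (pt 0 0) = pt 0 0 := hφ.map_frame _ (pt_mem_Qsq (by norm_num) (by norm_num))
    have hvt' : v t' = 0 := by
      have : φ (pt (v t) 0) = pt (v t') 0 := hv.2
      rw [hvt, h₀, pt_inj] at this
      exact this.1.symm
    exact ⟨hR, by simpa [hvt, hvt'] using h₀⟩
  · refine carries_of_onLine hφ hpos hneg (carries_frame hφ 0 0) (carries_frame hφ 0 2) hR
      (fun h => hvt (by linarith [(pt_inj.1 h).1])) (by simp) ?_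
      (fun s => by simp only [onLine_pt]; ring) (fun s => by simp only [onLine_pt]; ring)
    simp only [onLine_pt]
    rintro ⟨h₁, h₂⟩
    exact hvt (by linarith)

/-- Multiplication: the lines `x + y = 1 ± u` through `(1 ± u, 0)` and `(±u - 1, 2)` meet the
vertical `x = 1` in `(1, ±u)`; the lines through the origin and `(1, ±u)` meet the verticals
`x = ±v` in `(±v, uv)`, which span the horizontal through `(0, uv)`. -/
def mulGadget (u v : ℝ → ℝ) : Set (ℝ → ESp 2) :=
  subGadget 1 0 ∪ subGadget (-1) u ∪ subGadget u 1 ∪ subGadget v 0 ∪ subGadget (-v) 0 ∪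
    {fun s => pt 1 (u s), fun s => pt 1 (-u s), fun s => pt (v s) (u s * v s),
      fun s => pt (-v s) (u s * v s), fun s => pt 0 (u s * v s)}

theorem finite_mulGadget (u v : ℝ → ℝ) : (mulGadget u v).Finite := by
  unfold mulGadget subGadget
  exact Set.toFinite _

theorem carries_mulGadget (hφ : FramedLawrenceEquiv R R' φ) {u v : ℝ → ℝ}
    (hu : Carries R φ t t' fun s => pt (u s) 0) (hv : Carries R φ t t' fun s => pt (v s) 0)
    (hR : ∀ g ∈ mulGadget u v, g t ∈ R) : ∀ g ∈ mulGadget u v, Carries R φ t t' g := by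
  simp only [mulGadget, Set.mem_union, or_imp, forall_and, Set.mem_insert_iff,
    Set.mem_singleton_iff, forall_eq] at hR ⊢
  obtain ⟨⟨⟨⟨⟨R₁, R₂⟩, R₃⟩, R₄⟩, R₅⟩, m₁, m₂, m₃, m₄, m₅⟩ := hR
  have S₁ : ∀ g ∈ subGadget 1 0, Carries R φ t t' g :=
    carries_subGadget hφ (carries_frame hφ 1 0) (carries_frame hφ 0 0) R₁
  have hm1 : Carries R φ t t' fun s => pt ((-1 : ℝ → ℝ) s) 0 := by
    simpa using S₁ _ (by simp [subGadget])
  have S₂ := carries_subGadget hφ hm1 hu R₂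
  have S₃ := carries_subGadget hφ hu (carries_frame hφ 1 0) R₃
  have S₄ := carries_subGadget hφ hv (carries_frame hφ 0 0) R₄
  have hnv : Carries R φ t t' fun s => pt ((-v) s) 0 := by
    simpa using (carries_sub hφ hv (carries_frame hφ 0 0) R₄).2
  have S₅ := carries_subGadget hφ hnv (carries_frame hφ 0 0) R₅
  obtain ⟨hu1, hnu1⟩ : (Carries R φ t t' fun s => pt (-1 - u s) 2) ∧
      Carries R φ t t' fun s => pt (u s + 1) 0 := by
    simpa [sub_neg_eq_add] using carries_sub hφ hm1 hu R₂
  obtain ⟨hum1, h1mu⟩ := carries_sub hφ hu (carries_frame hφ 1 0) R₃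
  have hv2 : Carries R φ t t' fun s => pt (v s) 2 := by
    simpa using (carries_sub hφ hv (carries_frame hφ 0 0) R₄).1
  have hnv2 : Carries R φ t t' fun s => pt (-v s) 2 := by
    simpa using (carries_sub hφ hnv (carries_frame hφ 0 0) R₅).1
  have B₁ := carries_pt_one hφ hnu1 hum1 m₁
  have B₂ : Carries R φ t t' fun s => pt 1 (-u s) :=
    carries_pt_one hφ (by convert h1mu using 3; ring) (by convert hu1 using 3; ring) m₂
  have P₁ := carries_pt_mul hφ B₁ hv hv2 m₃
  have P₂ : Carries R φ t t' fun s => pt (-v s) (u s * v s) := by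
    simpa using carries_pt_mul hφ B₂ hnv hnv2 (by simpa using m₄)
  exact ⟨⟨⟨⟨⟨S₁, S₂⟩, S₃⟩, S₄⟩, S₅⟩, B₁, B₂, P₁, P₂, carries_pt_zero_mul hφ P₁ P₂ hv m₅⟩

/-- The mirror image of `mulGadget 1 w` moves `(0, w)` to `(w, 0)`. -/
def transferGadget (w : ℝ → ℝ) : Set (ℝ → ESp 2) := (swapCoords ∘ ·) '' mulGadget 1 w

theorem pt_zero_mem_transferGadget (w : ℝ → ℝ) : (fun s => pt (w s) 0) ∈ transferGadget w :=
  ⟨fun s => pt 0 ((1 : ℝ → ℝ) s * w s), by simp [mulGadget], by ext1 s; simp⟩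

theorem carries_transferGadget (hφ : FramedLawrenceEquiv R R' φ) {w : ℝ → ℝ}
    (hw : Carries R φ t t' fun s => pt 0 (w s)) (hR : ∀ g ∈ transferGadget w, g t ∈ R) :
    ∀ g ∈ transferGadget w, Carries R φ t t' g := by
  rintro _ ⟨g, hg, rfl⟩
  refine carries_comp_swap_iff.2 <|
    carries_mulGadget hφ.conj_swap (carries_frame hφ.conj_swap 1 0) ?_
      (fun g hg => ⟨_, hR _ ⟨g, hg, rfl⟩, swapCoords_swapCoords _⟩) g hg
  exact carries_comp_swap_iff.1 (by simpa [Function.comp_def] using hw)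

end Gadgets

/-- `f` is computed by a von Staudt construction `G`. -/
def Constructible (f : ℝ → ℝ) : Prop :=
  ∃ G : Set (ℝ → ESp 2), G.Finite ∧ (fun s => pt s 0) ∈ G ∧ (fun s => pt (f s) 0) ∈ G ∧
    ∀ (R R' : Set (ESp 2)) (φ : ESp 2 → ESp 2), FramedLawrenceEquiv R R' φ → ∀ t t' : ℝ,
      (∀ g ∈ G, g t ∈ R) → φ (pt t 0) = pt t' 0 → ∀ g ∈ G, Carries R φ t t' g

theorem constructible_id : Constructible id := by
  refine ⟨{fun s => pt s 0}, Set.finite_singleton _, rfl, rfl, ?_⟩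
  rintro R R' φ - t t' hR h _ rfl
  exact ⟨hR _ rfl, h⟩

theorem constructible_one : Constructible 1 := by
  refine ⟨{fun s => pt s 0, fun _ => pt 1 0}, Set.toFinite _, by simp, by simp, ?_⟩
  rintro R R' φ hφ t t' hR h _ (rfl | rfl)
  · exact ⟨hR _ (.inl rfl), h⟩
  · exact carries_frame hφ 1 0

namespace Constructible

theorem of_gadget {u v f : ℝ → ℝ} (hu : Constructible u) (hv : Constructible v)
    (K : Set (ℝ → ESp 2)) (hK : K.Finite) (hf : (fun s => pt (f s) 0) ∈ K)
    (hKc : ∀ (R R' : Set (ESp 2)) (φ : ESp 2 → ESp 2), FramedLawrenceEquiv R R' φ →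
      ∀ t t' : ℝ, (Carries R φ t t' fun s => pt (u s) 0) → (Carries R φ t t' fun s => pt (v s) 0) →
        (∀ g ∈ K, g t ∈ R) → ∀ g ∈ K, Carries R φ t t' g) :
    Constructible f := by
  obtain ⟨G, hG, hGin, hGu, hGc⟩ := hu
  obtain ⟨H, hH, -, hHv, hHc⟩ := hv
  refine ⟨G ∪ H ∪ K, (hG.union hH).union hK, .inl (.inl hGin), .inr hf, ?_⟩
  intro R R' φ hφ t t' hR h
  have hGR := hGc R R' φ hφ t t' (fun g hg => hR g (.inl (.inl hg))) h
  have hHR := hHc R R' φ hφ t t' (fun g hg => hR g (.inl (.inr hg))) h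
  rintro g ((hg | hg) | hg)
  · exact hGR g hg
  · exact hHR g hg
  · exact hKc R R' φ hφ t t' (hGR _ hGu) (hHR _ hHv) (fun g hg => hR g (.inr hg)) g hg

theorem sub {u v : ℝ → ℝ} (hu : Constructible u) (hv : Constructible v) :
    Constructible (u - v) :=
  hu.of_gadget hv (subGadget v u) (finite_subGadget v u) (by simp [subGadget])
    fun _ _ _ hφ _ _ hu hv => carries_subGadget hφ hv hu

theorem mul {u v : ℝ → ℝ} (hu : Constructible u) (hv : Constructible v) :
    Constructible (u * v) := by
  refine hu.of_gadget hv (mulGadget u v ∪ transferGadget (u * v))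
    ((finite_mulGadget u v).union ((finite_mulGadget 1 (u * v)).image _))
    (.inr (pt_zero_mem_transferGadget _)) fun R R' φ hφ t t' hu hv hR => ?_
  have hM := carries_mulGadget hφ hu hv fun g hg => hR g (.inl hg)
  rintro g (hg | hg)
  · exact hM g hg
  · exact carries_transferGadget hφ (hM _ (by simp [mulGadget])) (fun g hg => hR g (.inr hg)) g hg

end Constructible

def constructibleSubring : Subring (ℝ → ℝ) where
  carrier := {f | Constructible f}
  one_mem' := constructible_one
  mul_mem' := Constructible.mul
  zero_mem' := by simpa using constructible_one.sub constructible_one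
  add_mem' hf hg := by simpa using hf.sub ((constructible_one.sub constructible_one).sub hg)
  neg_mem' hf := by simpa using (constructible_one.sub constructible_one).sub hf

theorem aeval_mem_constructibleSubring (ψ : Polynomial ℤ) :
    (fun s => Polynomial.aeval s ψ) ∈ constructibleSubring := by
  induction ψ using Polynomial.induction_on with
  | C a =>
    convert intCast_mem constructibleSubring a using 1
    ext s; simp
  | add p q hp hq =>
    convert add_mem hp hq using 1
    ext s; simp
  | monomial n a h =>
    convert mul_mem h constructible_id using 1
    ext s; simp [pow_succ, mul_assoc]

theorem Constructible.exists_isFunctionalArrangement {f : ℝ → ℝ} (hf : Constructible f) :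
    ∃ F : (Fin 1 → ℝ) → Set (ESp 2), IsFunctionalArrangement (fun x => f (x 0)) F := by
  obtain ⟨G, hG, hin, hout, hGc⟩ := hf
  refine ⟨fun x => Qsq ∪ (fun g => g (x 0)) '' G, fun x => ?_⟩
  have hx : ∀ i, x i • e1 = pt (x 0) 0 := fun i => by rw [Subsingleton.elim i 0, smul_e1]
  have hGR : ∀ g ∈ G, g (x 0) ∈ Qsq ∪ (fun g => g (x 0)) '' G := fun g hg => .inr ⟨g, hg, rfl⟩
  have framed : ∀ R' φ, LawrenceEquivConfig (Qsq ∪ (fun g => g (x 0)) '' G) R' φ →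
      (∀ q ∈ Qsq, φ q = q) → FramedLawrenceEquiv _ R' φ :=
    fun R' φ hL hfix => ⟨hL, Set.subset_union_left, hfix⟩
  refine ⟨finite_Qsq.union (hG.image _), smul_e1 _ ▸ hGR _ hout, fun i => hx i ▸ hGR _ hin,
    Set.subset_union_left, ⟨?_, ?_⟩, ?_⟩
  · rintro _ (⟨i, rfl⟩ | hq)
    · exact hx i ▸ hGR _ hin
    · exact .inl hq
  · intro R' φ hL hfix
    have hφ := framed R' φ hL fun q hq => hfix q (.inr hq)
    have ht : φ (pt (x 0) 0) = pt (x 0) 0 := hx 0 ▸ hfix _ (.inl ⟨0, rfl⟩)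
    rintro _ (hq | ⟨g, hg, rfl⟩)
    · exact hφ.map_frame _ hq
    · exact (hGc _ R' φ hφ _ _ hGR ht g hg).2
  · intro R' φ hL hfix hfout
    have hφ := framed R' φ hL hfix
    obtain ⟨t', ht'⟩ := hφ.exists_map_pt_zero (hGR _ hin)
    have hft' : φ (pt (f (x 0)) 0) = pt (f t') 0 := (hGc _ R' φ hφ _ _ hGR ht' _ hout).2
    rw [smul_e1, hft', pt_inj] at hfout
    exact ⟨fun _ => t', hfout.1, fun i => by rw [hx i, ht', smul_e1]⟩

/-- **Von Staudt constructions.** Every integer-coefficient polynomial is realized by a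
functional arrangement. -/
theorem polynomial_functional_arrangement (ψ : Polynomial ℤ) :
    ∃ F : (Fin 1 → ℝ) → Set (ESp 2),
      IsFunctionalArrangement (fun x => Polynomial.aeval (x 0) ψ) F :=
  Constructible.exists_isFunctionalArrangement (aeval_mem_constructibleSubring ψ)
end
end

section
/- Let d ≥ 1, let 0 ≤ ε ≤ 1/36, and let P and P' be nonempty polytopes in ℝ^d such that every vertex of P is a vertex of P' and d_H(P, B₁(0)) ≤ ε. Then d_H(P', B₁(0)) ≤ 6√ε. -/
open scoped RealInnerProductSpace

noncomputable section

/-! `d_H(P, B₁(0)) ≤ ε` gives `P ⊆ B_{1+ε}` and, by separating points from the convex set `P`,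
`B_{1-ε} ⊆ P`; as `P` is the convex hull of its vertices, `P ⊆ P'`. Suppose some `v = R u ∈ P'`
with `‖u‖ = 1` had `R ≥ 1 + 6σ`, where `0 < σ ≤ 1/6` and `√ε ≤ σ` (a positive `σ` rather than
`√ε` itself also covers `ε = 0`). The vertex `w` of `P` maximizing `⟪u, ·⟫` satisfies
`⟪u, w⟫ ≥ 1 - ε` and `‖w‖ ≤ 1 + ε`, so `w` lies within `2√ε` of the ray through `u`. Pushing `w`
slightly away from `v` lands in `B_{1-ε} ⊆ P'`, which puts the vertex `w` of `P'` in the interior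
of a segment of `P'`. -/

open Metric

section MetricSpace

variable {α : Type*} [PseudoMetricSpace α]

lemma dist_le_add_infDist_closedBall (x c : α) {r : ℝ} (hr : 0 ≤ r) :
    dist x c ≤ r + infDist x (closedBall c r) := by
  refine le_of_forall_pos_lt_add fun η hη => ?_
  obtain ⟨y, hy, hxy⟩ := (infDist_lt_iff ⟨c, mem_closedBall_self hr⟩).1
    (lt_add_of_pos_right (infDist x (closedBall c r)) hη)
  calc dist x c ≤ dist x y + dist y c := dist_triangle x y c
    _ < r + infDist x (closedBall c r) + η := by
      rw [mem_closedBall] at hy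
      linarith

end MetricSpace

section NormedSpace

variable {E : Type*} [NormedAddCommGroup E] [NormedSpace ℝ E]

lemma infDist_closedBall_le {x c : E} {r δ : ℝ} (hr : 0 ≤ r) (hδ : 0 ≤ δ)
    (hx : dist x c ≤ r + δ) : infDist x (closedBall c r) ≤ δ := by
  rcases le_or_gt (dist x c) r with hxr | hrx
  · rw [infDist_zero_of_mem (mem_closedBall.2 hxr)]
    exact hδ
  have hxc : 0 < dist x c := hr.trans_lt hrx
  set y := AffineMap.lineMap c x (r / dist x c)
  have hyc : dist y c = r := by
    rw [dist_lineMap_left, dist_comm c x, Real.norm_of_nonneg (by positivity),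
      div_mul_cancel₀ r hxc.ne']
  have hxy : dist x y = dist x c - r := by
    rw [dist_comm, dist_lineMap_right, dist_comm c x,
      Real.norm_of_nonneg (sub_nonneg.2 ((div_le_one hxc).2 hrx.le)), sub_mul,
      div_mul_cancel₀ r hxc.ne', one_mul]
  calc infDist x (closedBall c r) ≤ dist x y := infDist_le_dist_of_mem hyc.le
    _ ≤ δ := by linarith

lemma hausdorffDist_closedBall_le_iff {K : Set E} (hK : Bornology.IsBounded K)
    (hKne : K.Nonempty) {c : E} {r δ : ℝ} (hr : 0 ≤ r) (hδ : 0 ≤ δ) :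
    hausdorffDist K (closedBall c r) ≤ δ ↔
      K ⊆ closedBall c (r + δ) ∧ ∀ z ∈ closedBall c r, infDist z K ≤ δ := by
  have hfin : hausdorffEDist K (closedBall c r) ≠ ⊤ :=
    hausdorffEDist_ne_top_of_nonempty_of_bounded hKne ⟨c, mem_closedBall_self hr⟩ hK
      isBounded_closedBall
  constructor
  · intro h
    refine ⟨fun x hx => ?_, fun z hz => ?_⟩
    · have hxc := dist_le_add_infDist_closedBall x c hr
      have hxK := (infDist_le_hausdorffDist_of_mem hx hfin).trans h
      exact mem_closedBall.2 (by linarith)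
    · rw [hausdorffDist_comm] at h
      rw [hausdorffEDist_comm] at hfin
      exact (infDist_le_hausdorffDist_of_mem hz hfin).trans h
  · rintro ⟨hKball, hnear⟩
    exact hausdorffDist_le_of_infDist hδ
      (fun x hx => infDist_closedBall_le hr hδ (mem_closedBall.1 (hKball hx))) hnear

end NormedSpace

section InnerProductSpace

variable {E : Type*} [NormedAddCommGroup E] [InnerProductSpace ℝ E]

/-- Separation by the nearest-point projection `v` of a point `y ∉ K`: the point `z` at
distance `ε` from `y` in the direction `y - v` is at distance `> ε` from `K`. -/
lemma closedBall_sub_subset_of_infDist_le {K : Set E} (hKc : IsComplete K)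
    (hKcv : Convex ℝ K) (hKne : K.Nonempty) {c : E} {r ε : ℝ} (hε : 0 ≤ ε)
    (hnear : ∀ z ∈ closedBall c r, infDist z K ≤ ε) : closedBall c (r - ε) ⊆ K := by
  intro y hy
  by_contra hyK
  obtain ⟨v, hvK, hv⟩ := exists_norm_eq_iInf_of_complete_convex hKne hKc hKcv y
  have hproj := (norm_eq_iInf_iff_real_inner_le_zero hKcv hvK).1 hv
  set δ := ‖y - v‖
  have hδ : 0 < δ := norm_pos_iff.2 (sub_ne_zero.2 fun h => hyK (h ▸ hvK))
  set z := y + (ε / δ) • (y - v)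
  have hz : z ∈ closedBall c r := by
    rw [mem_closedBall] at hy ⊢
    calc dist z c ≤ dist y c + ‖(ε / δ) • (y - v)‖ := by
          rw [dist_eq_norm, dist_eq_norm, add_sub_right_comm]
          exact norm_add_le _ _
      _ = dist y c + ε := by
          rw [norm_smul, Real.norm_of_nonneg (by positivity), div_mul_cancel₀ ε hδ.ne']
      _ ≤ r := by linarith
  have hfar : ∀ q ∈ K, δ + ε ≤ dist z q := by
    intro q hq
    have hinner : δ * (δ + ε) ≤ ⟪y - v, z - q⟫ := by
      have hzq : z - q = (1 + ε / δ) • (y - v) - (q - v) := by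
        simp only [z]
        module
      rw [hzq, inner_sub_right, real_inner_smul_right, real_inner_self_eq_norm_sq]
      have hscale : (1 + ε / δ) * δ ^ 2 = δ * (δ + ε) := by
        field_simp
      linarith [hproj q hq]
    have hcs : ⟪y - v, z - q⟫ ≤ δ * dist z q := by
      rw [dist_eq_norm]
      exact real_inner_le_norm _ _
    exact le_of_mul_le_mul_left (hinner.trans hcs) hδ
  obtain ⟨q, hq, hzq⟩ := (infDist_lt_iff hKne).1
    ((hnear z hz).trans_lt (lt_add_of_pos_left ε hδ))
  exact (hfar q hq).not_gt hzq

/-- `x := w + t • (w - R • u)`, with `t` chosen so that `⟪u, x⟫ = ⟪u, w⟫ - σ`, lies in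
`B_{1-ε} ⊆ K`, and `w` lies strictly between `x` and `R • u`. -/
lemma lt_of_smul_mem_of_mem_extremePoints {K : Set E} {ε σ R : ℝ} {u w : E}
    (hσ0 : 0 < σ) (hσ : σ ≤ 1 / 6) (hεσ : ε ≤ σ ^ 2)
    (hball : closedBall 0 (1 - ε) ⊆ K) (hw : w ∈ K.extremePoints ℝ) (hwn : ‖w‖ ≤ 1 + ε)
    (hu : ‖u‖ = 1) (huw : 1 - ε ≤ ⟪u, w⟫) (hRu : R • u ∈ K) : R < 1 + 6 * σ := by
  by_contra! hR
  set a := ⟪u, w⟫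
  have haw : a ≤ ‖w‖ := (real_inner_le_norm u w).trans_eq (by rw [hu, one_mul])
  have hε0 : 0 ≤ ε := by linarith
  have hε1 : ε ≤ 1 / 36 := by nlinarith
  have hRa : 5 * σ ≤ R - a := by nlinarith
  set t := σ / (R - a)
  have ht0 : 0 < t := div_pos hσ0 (by linarith)
  have htR : t * (R - a) = σ := div_mul_cancel₀ σ (by linarith)
  have ht : t ≤ 1 / 5 := by
    rw [div_le_iff₀ (by linarith)]
    linarith
  set x := w + t • (w - R • u)
  have hx_sq : ‖x‖ ^ 2 = (a - σ) ^ 2 + (1 + t) ^ 2 * (‖w‖ ^ 2 - a ^ 2) := by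
    have hx : x = (1 + t) • w - (t * R) • u := by
      simp only [x]
      module
    rw [hx, norm_sub_sq_real, norm_smul, norm_smul, real_inner_smul_left,
      real_inner_smul_right, real_inner_comm, hu, ← htR]
    simp only [Real.norm_eq_abs, mul_pow, sq_abs]
    ring
  have hx : ‖x‖ ≤ 1 - ε := by
    refine (pow_le_pow_iff_left₀ (norm_nonneg x) (by linarith) two_ne_zero).1 ?_
    have hperp : ‖w‖ ^ 2 - a ^ 2 ≤ 4 * ε := by
      nlinarith [pow_le_pow_left₀ (norm_nonneg w) hwn 2,
        pow_le_pow_left₀ (by linarith) huw 2]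
    have hperp0 : 0 ≤ ‖w‖ ^ 2 - a ^ 2 :=
      sub_nonneg.2 (pow_le_pow_left₀ (by linarith) haw 2)
    have ht2 : (1 + t) ^ 2 ≤ 36 / 25 := by nlinarith
    have haσ : (a - σ) ^ 2 ≤ (1 + ε - σ) ^ 2 := by nlinarith
    rw [hx_sq]
    nlinarith [mul_le_mul ht2 hperp hperp0 (by norm_num)]
  have hxK : x ∈ K := hball (mem_closedBall_zero_iff.2 hx)
  have hseg : w ∈ openSegment ℝ x (R • u) := by
    refine ⟨1 / (1 + t), t / (1 + t), by positivity, by positivity, by field_simp, ?_⟩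
    simp only [x]
    match_scalars
    · field_simp
    · ring
  have hRw : R • u = w := ((mem_extremePoints.1 hw).2 x hxK (R • u) hRu hseg).2
  have hRa' : a = R := by
    simp only [a]
    rw [← hRw, real_inner_smul_right, real_inner_self_eq_norm_sq, hu, one_pow, mul_one]
  nlinarith

lemma norm_le_of_forall_exists_mem_extremePoints {K : Set E} {ε : ℝ} (hε : ε ≤ 1 / 36)
    (hball : closedBall 0 (1 - ε) ⊆ K)
    (hvert : ∀ u : E, ‖u‖ = 1 → ∃ w ∈ K.extremePoints ℝ, ‖w‖ ≤ 1 + ε ∧ 1 - ε ≤ ⟪u, w⟫)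
    {v : E} (hv : v ∈ K) : ‖v‖ ≤ 1 + 6 * √ε := by
  by_contra! hlt
  have hv0 : 0 < ‖v‖ := by linarith [Real.sqrt_nonneg ε]
  set σ := min ((‖v‖ - 1) / 6) (1 / 6)
  have hsqrt : √ε ≤ σ :=
    le_min (by linarith) (Real.sqrt_le_left (by norm_num) |>.2 (by linarith))
  have hσ0 : 0 < σ := lt_min (by linarith [Real.sqrt_nonneg ε]) (by norm_num)
  have hεσ : ε ≤ σ ^ 2 := (Real.sqrt_le_left hσ0.le).1 hsqrt
  have hu : ‖‖v‖⁻¹ • v‖ = 1 := by rw [norm_smul, norm_inv, norm_norm, inv_mul_cancel₀ hv0.ne']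
  obtain ⟨w, hw, hwn, huw⟩ := hvert _ hu
  have hR := lt_of_smul_mem_of_mem_extremePoints hσ0 (min_le_right _ _) hεσ hball hw hwn hu huw
    (R := ‖v‖) (by rwa [smul_inv_smul₀ hv0.ne'])
  linarith [min_le_left ((‖v‖ - 1) / 6) (1 / 6)]

end InnerProductSpace

namespace IsPolytope

variable {n : ℕ} {P : Set (ESp n)}

lemma isCompact (hP : IsPolytope P) : IsCompact P := by
  obtain ⟨V, rfl⟩ := hP
  exact V.finite_toSet.isCompact_convexHull ℝ

lemma convex (hP : IsPolytope P) : Convex ℝ P := by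
  obtain ⟨V, rfl⟩ := hP
  exact convex_convexHull ℝ _

lemma finite_verts (hP : IsPolytope P) : (verts P).Finite := by
  obtain ⟨V, rfl⟩ := hP
  exact V.finite_toSet.subset extremePoints_convexHull_subset

/-- Krein–Milman, with the closure dropped because the vertex set is finite. -/
lemma convexHull_verts (hP : IsPolytope P) : convexHull ℝ (verts P) = P := by
  rw [← (hP.finite_verts.isCompact_convexHull ℝ).isClosed.closure_eq]
  exact closure_convexHull_extremePoints hP.isCompact hP.convex

lemma subset_of_verts_subset (hP : IsPolytope P) {K : Set (ESp n)} (hK : Convex ℝ K)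
    (hsub : verts P ⊆ verts K) : P ⊆ K :=
  hP.convexHull_verts ▸ convexHull_min (hsub.trans extremePoints_subset) hK

lemma exists_mem_verts_inner_ge (hP : IsPolytope P) {p : ESp n} (hp : p ∈ P) (u : ESp n) :
    ∃ w ∈ verts P, ⟪u, p⟫ ≤ ⟪u, w⟫ :=
  ((innerₛₗ ℝ u).convexOn convex_univ).exists_ge_of_mem_convexHull (Set.subset_univ _)
    (hP.convexHull_verts.symm ▸ hp)

lemma exists_mem_verts_inner_ge_of_infDist_le (hP : IsPolytope P) (hPne : P.Nonempty)
    {u : ESp n} (hu : ‖u‖ = 1) {ε : ℝ} (hε : infDist u P ≤ ε) :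
    ∃ w ∈ verts P, 1 - ε ≤ ⟪u, w⟫ := by
  obtain ⟨p, hp, hup⟩ := hP.isCompact.exists_infDist_eq_dist hPne u
  obtain ⟨w, hw, hpw⟩ := hP.exists_mem_verts_inner_ge hp u
  have hcs : ⟪u, u - p⟫ ≤ dist u p := by
    rw [dist_eq_norm]
    exact (real_inner_le_norm _ _).trans_eq (by rw [hu, one_mul])
  rw [inner_sub_right, real_inner_self_eq_norm_sq, hu] at hcs
  exact ⟨w, hw, by linarith⟩

end IsPolytope

theorem hausdorff_dist_superpolytope_general
    (d : ℕ) (ε : ℝ) (hε : ε ≤ 1 / 36)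
    (P P' : Set (ESp d)) (hP : IsPolytope P) (hP' : IsPolytope P')
    (hPne : P.Nonempty)
    (hsub : verts P ⊆ verts P')
    (hdist : Metric.hausdorffDist P (Metric.closedBall 0 1) ≤ ε) :
    Metric.hausdorffDist P' (Metric.closedBall 0 1) ≤ 6 * Real.sqrt ε := by
  have hε0 : 0 ≤ ε := hausdorffDist_nonneg.trans hdist
  obtain ⟨hPball, hnear⟩ :=
    (hausdorffDist_closedBall_le_iff hP.isCompact.isBounded hPne zero_le_one hε0).1 hdist
  have hPP' : P ⊆ P' := hP.subset_of_verts_subset hP'.convex hsub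
  have hball : closedBall 0 (1 - ε) ⊆ P' :=
    (closedBall_sub_subset_of_infDist_le hP.isCompact.isComplete hP.convex hPne hε0
      hnear).trans hPP'
  have hvert : ∀ u : ESp d, ‖u‖ = 1 →
      ∃ w ∈ P'.extremePoints ℝ, ‖w‖ ≤ 1 + ε ∧ 1 - ε ≤ ⟪u, w⟫ := by
    intro u hu
    obtain ⟨w, hw, hwu⟩ := hP.exists_mem_verts_inner_ge_of_infDist_le hPne hu
      (hnear u (mem_closedBall_zero_iff.2 hu.le))
    exact ⟨w, hsub hw, mem_closedBall_zero_iff.1 (hPball (extremePoints_subset hw)), hwu⟩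
  have hε_le : ε ≤ 6 * √ε := by
    have hsqrt : √ε ≤ 1 / 6 := (Real.sqrt_le_left (by norm_num)).2 (by linarith)
    nlinarith [Real.sq_sqrt hε0, Real.sqrt_nonneg ε]
  refine (hausdorffDist_closedBall_le_iff hP'.isCompact.isBounded (hPne.mono hPP')
    zero_le_one (by positivity)).2 ⟨fun v hv => ?_, fun z hz => ?_⟩
  · exact mem_closedBall_zero_iff.2 (norm_le_of_forall_exists_mem_extremePoints hε hball hvert hv)
  · exact (infDist_le_infDist_of_subset hPP' hPne).trans ((hnear z hz).trans hε_le)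

/-- If `P` is a polytope with `d_H(P, B₁(0)) ≤ ε ≤ 1/36`, then any polytope `P'` whose
vertex set contains that of `P` satisfies `d_H(P', B₁(0)) ≤ 6√ε`. -/
theorem hausdorff_dist_superpolytope
    (d : ℕ) (hd : 1 ≤ d) (ε : ℝ) (hε0 : 0 ≤ ε) (hε : ε ≤ 1 / 36)
    (P P' : Set (ESp d)) (hP : IsPolytope P) (hP' : IsPolytope P')
    (hPne : P.Nonempty) (hP'ne : P'.Nonempty)
    (hsub : verts P ⊆ verts P')
    (hdist : Metric.hausdorffDist P (Metric.closedBall 0 1) ≤ ε) :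
    Metric.hausdorffDist P' (Metric.closedBall 0 1) ≤ 6 * Real.sqrt ε :=
  hausdorff_dist_superpolytope_general d ε hε P P' hP hP' hPne hsub hdist
end
end

section
/- Let V be a nonempty finite subset of ℝ^d whose convex hull contains the origin. Then there exist v, w ∈ V with ⟨v, w⟩ ≤ 0. Consequently, if in addition ‖v‖ ≥ 1/√2 for every v ∈ V, then there exist v, w ∈ V with ‖v − w‖ ≥ 1. -/
open scoped RealInnerProductSpace

noncomputable section

/-! For any `v ∈ V`, the linear functional `⟪v, ·⟫` vanishes at `0 ∈ conv V`, so by the minimum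
principle for concave functions it is `≤ 0` at some `w ∈ V`. Then
`‖v - w‖² = ‖v‖² + ‖w‖² - 2⟪v, w⟫ ≥ 1/2 + 1/2`. -/

theorem exists_inner_nonpos_of_zero_mem_convexHull {E : Type*} [NormedAddCommGroup E]
    [InnerProductSpace ℝ E] {s : Set E} (h0 : (0 : E) ∈ convexHull ℝ s) (v : E) :
    ∃ w ∈ s, ⟪v, w⟫ ≤ 0 := by
  simpa using ((innerSL ℝ v).toLinearMap.concaveOn convex_univ).exists_le_of_mem_convexHull
    (Set.subset_univ s) h0

theorem one_le_norm_sub_of_inner_nonpos {E : Type*} [NormedAddCommGroup E]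
    [InnerProductSpace ℝ E] {v w : E} (hv : 1 / √2 ≤ ‖v‖) (hw : 1 / √2 ≤ ‖w‖)
    (hvw : ⟪v, w⟫ ≤ 0) : 1 ≤ ‖v - w‖ := by
  have half_le_sq {x : E} (hx : 1 / √2 ≤ ‖x‖) : 1 / 2 ≤ ‖x‖ ^ 2 :=
    calc (1 : ℝ) / 2 = (1 / √2) ^ 2 := by rw [div_pow, Real.sq_sqrt zero_le_two, one_pow]
      _ ≤ ‖x‖ ^ 2 := by gcongr
  have one_le_sq : 1 ≤ ‖v - w‖ ^ 2 := by
    rw [norm_sub_sq_real]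
    linarith [half_le_sq hv, half_le_sq hw]
  exact (one_le_sq_iff₀ (norm_nonneg _)).mp one_le_sq

theorem exists_far_points_of_zero_mem_hull_general
    (d : ℕ) (V : Finset (ESp d))
    (h0 : (0 : ESp d) ∈ convexHull ℝ (V : Set (ESp d))) :
    (∃ v ∈ V, ∃ w ∈ V, ⟪v, w⟫ ≤ 0) ∧
    ((∀ v ∈ V, 1 / Real.sqrt 2 ≤ ‖v‖) → ∃ v ∈ V, ∃ w ∈ V, 1 ≤ ‖v - w‖) := by
  obtain ⟨v, hv⟩ := convexHull_nonempty_iff.mp ⟨0, h0⟩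
  obtain ⟨w, hw, hvw⟩ := exists_inner_nonpos_of_zero_mem_convexHull h0 v
  exact ⟨⟨v, hv, w, hw, hvw⟩, fun hnorm =>
    ⟨v, hv, w, hw, one_le_norm_sub_of_inner_nonpos (hnorm v hv) (hnorm w hw) hvw⟩⟩

/-- If the convex hull of a nonempty finite `V ⊆ ℝ^d` contains the origin, then some two
points of `V` have nonpositive inner product; consequently, if moreover all points of `V`
have norm at least `1/√2`, then two points of `V` are at distance at least `1`. -/
theorem exists_far_points_of_zero_mem_hull
    (d : ℕ) (V : Finset (ESp d)) (hne : V.Nonempty)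
    (h0 : (0 : ESp d) ∈ convexHull ℝ (V : Set (ESp d))) :
    (∃ v ∈ V, ∃ w ∈ V, ⟪v, w⟫ ≤ 0) ∧
    ((∀ v ∈ V, 1 / Real.sqrt 2 ≤ ‖v‖) → ∃ v ∈ V, ∃ w ∈ V, 1 ≤ ‖v - w‖) :=
  exists_far_points_of_zero_mem_hull_general d V h0
end
end

section
/- Let d ≥ 2 and let P be a d-dimensional polytope in ℝ^d with at most k facets. Then P has at most C(k, ⌊k/2⌋) edges, where C denotes the binomial coefficient; in particular, P has at most 2^k edges. -/
open scoped RealInnerProductSpace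

noncomputable section

/-! Every edge of a full-dimensional polytope is the intersection of the facets containing it:
a supporting hyperplane through a face that misses a point `y` of `P` can be tilted about
the face, keeping `y` strictly on one side, until it touches a further vertex; this raises
the dimension of the face, so iterating reaches a facet. Hence sending an edge to the set of
facets containing it maps the edges injectively onto an antichain of subsets of the facets,
and Sperner's theorem bounds their number. -/

open Module

theorem Set.ncard_le_choose_of_reflects {α β : Type*} {X : Set α} {Y : Set β}
    (hY : Y.Finite) {k : ℕ} (hk : Y.ncard ≤ k) (R : α → β → Prop)
    (hR : ∀ x ∈ X, ∀ x' ∈ X, (∀ y ∈ Y, R x y → R x' y) → x = x') :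
    X.Finite ∧ X.ncard ≤ k.choose (k / 2) := by
  classical
  let trace : α → Finset hY.toFinset := fun x => {y | R x y}
  have hrefl : ∀ x ∈ X, ∀ x' ∈ X, trace x ⊆ trace x' → x = x' := by
    refine fun x hx x' hx' h => hR x hx x' hx' fun y hy hxy => ?_
    have := @h ⟨y, hY.mem_toFinset.mpr hy⟩
    simp_all [trace]
  have hinj : Set.InjOn trace X := fun x hx x' hx' h => hrefl x hx x' hx' h.subset
  have hX : X.Finite := Set.Finite.of_finite_image (Set.toFinite _) hinj
  have hanti : IsAntichain (· ⊆ ·) (SetLike.coe (hX.toFinset.image trace)) := by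
    simp only [Finset.coe_image, Set.Finite.coe_toFinset]
    rintro _ ⟨x, hx, rfl⟩ _ ⟨x', hx', rfl⟩ hne h
    exact hne (congrArg trace (hrefl x hx x' hx' h))
  refine ⟨hX, ?_⟩
  calc X.ncard = (hX.toFinset.image trace).card := by
        rw [Finset.card_image_of_injOn (by simpa using hinj), Set.ncard_eq_toFinset_card _ hX]
    _ ≤ (Fintype.card hY.toFinset).choose (Fintype.card hY.toFinset / 2) := hanti.sperner
    _ ≤ k.choose (Fintype.card hY.toFinset / 2) := by
        refine Nat.choose_le_choose _ ?_
        rwa [Fintype.card_coe, ← Set.ncard_eq_toFinset_card _ hY]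
    _ ≤ k.choose (k / 2) := Nat.choose_le_middle _ _

theorem Finset.exists_add_mul_le_zero_eq_zero {ι : Type*} (s : Finset ι) {f g : ι → ℝ}
    (hf : ∀ i ∈ s, f i ≤ 0) (hg : ∃ i ∈ s, 0 < g i) :
    ∃ t, (∀ i ∈ s, f i + t * g i ≤ 0) ∧ ∃ i ∈ s, 0 < g i ∧ f i + t * g i = 0 := by
  classical
  obtain ⟨w, hw, hmin⟩ := (s.filter fun i => 0 < g i).exists_min_image
    (fun i => -f i / g i) (by simpa [Finset.filter_nonempty_iff] using hg)
  rw [Finset.mem_filter] at hw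
  refine ⟨-f w / g w, fun i hi => ?_,
    w, hw.1, hw.2, by rw [div_mul_cancel₀ _ hw.2.ne']; ring⟩
  rcases le_or_gt (g i) 0 with hgi | hgi
  · nlinarith [hf i hi, div_nonneg (neg_nonneg.mpr (hf w hw.1)) hw.2.le]
  · have := hmin i (Finset.mem_filter.mpr ⟨hi, hgi⟩)
    rw [le_div_iff₀ hgi] at this
    linarith

section InnerProductSpace

variable {E : Type*} [NormedAddCommGroup E] [InnerProductSpace ℝ E]

theorem mem_orthogonal_vectorSpan_of_inner_eq {S : Set E} {c : E} {a : ℝ}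
    (h : ∀ x ∈ S, ⟪c, x⟫ = a) : c ∈ (vectorSpan ℝ S)ᗮ := by
  have hle : vectorSpan ℝ S ≤ (ℝ ∙ c)ᗮ := by
    refine Submodule.span_le.mpr ?_
    rintro _ ⟨x, hx, y, hy, rfl⟩
    rw [SetLike.mem_coe, Submodule.mem_orthogonal_singleton_iff_inner_right]
    change ⟪c, x - y⟫ = 0
    rw [inner_sub_right, h x hx, h y hy, sub_self]
  exact (Submodule.mem_orthogonal _ _).mpr fun u hu =>
    Submodule.mem_orthogonal_singleton_iff_inner_left.mp (hle hu)

theorem inner_eq_of_mem_orthogonal_vectorSpan {S : Set E} {c x y : E}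
    (hc : c ∈ (vectorSpan ℝ S)ᗮ) (hx : x ∈ S) (hy : y ∈ S) : ⟪c, x⟫ = ⟪c, y⟫ := by
  have := Submodule.inner_left_of_mem_orthogonal (vsub_mem_vectorSpan ℝ hx hy) hc
  rwa [vsub_eq_sub, inner_sub_right, sub_eq_zero] at this

variable [FiniteDimensional ℝ E]

theorem finrank_lt_of_ne_zero_mem_orthogonal {K : Submodule ℝ E} {c : E} (hc : c ≠ 0)
    (h : c ∈ Kᗮ) : finrank ℝ K < finrank ℝ E := by
  refine Submodule.finrank_lt fun hK => hc ?_
  rwa [hK, Submodule.top_orthogonal_eq_bot, Submodule.mem_bot] at h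

theorem exists_mem_orthogonal_inner_lt {V : Set E} (hV : vectorSpan ℝ V = ⊤)
    {K : Submodule ℝ E} (hK : K ≠ ⊤) (p : E) : ∃ e ∈ Kᗮ, ∃ v ∈ V, ⟪e, p⟫ < ⟪e, v⟫ := by
  obtain ⟨e, he, he0⟩ :=
    (Submodule.ne_bot_iff _).mp (mt Submodule.orthogonal_eq_bot_iff.mp hK)
  by_contra! hle
  have hconst : ∀ v ∈ V, ⟪e, v⟫ = ⟪e, p⟫ := fun v hv =>
    le_antisymm (hle e he v hv) <| by
      simpa [inner_neg_left] using hle (-e) (Submodule.neg_mem _ he) v hv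
  have := mem_orthogonal_vectorSpan_of_inner_eq hconst
  rw [hV, Submodule.top_orthogonal_eq_bot, Submodule.mem_bot] at this
  exact he0 this

end InnerProductSpace

variable {d : ℕ}

theorem polyDim_eq_finrank_vectorSpan (S : Set (ESp d)) :
    polyDim S = finrank ℝ (vectorSpan ℝ S) := by
  rw [polyDim, direction_affineSpan]

theorem polyDim_convexHull (S : Set (ESp d)) : polyDim (convexHull ℝ S) = polyDim S := by
  rw [polyDim, affineSpan_convexHull, polyDim]

theorem nonempty_of_polyDim_pos {S : Set (ESp d)} (h : 0 < polyDim S) : S.Nonempty := by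
  rw [Set.nonempty_iff_ne_empty]
  rintro rfl
  rw [polyDim_eq_finrank_vectorSpan, vectorSpan_empty, finrank_bot] at h
  exact h.false

theorem vectorSpan_eq_top_of_polyDim_eq {S : Set (ESp d)} (h : polyDim S = d) :
    vectorSpan ℝ S = ⊤ :=
  Submodule.eq_top_of_finrank_eq <| by
    rw [← polyDim_eq_finrank_vectorSpan, h, finrank_euclideanSpace_fin]

theorem polyDim_add_one_le_of_inner_eq {S : Set (ESp d)} {c : ESp d} {a : ℝ} (hc : c ≠ 0)
    (h : ∀ x ∈ S, ⟪c, x⟫ = a) : polyDim S + 1 ≤ d := by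
  have := finrank_lt_of_ne_zero_mem_orthogonal hc (mem_orthogonal_vectorSpan_of_inner_eq h)
  rw [finrank_euclideanSpace_fin, ← polyDim_eq_finrank_vectorSpan] at this
  exact this

theorem IsFaceOf.subset {P F : Set (ESp d)} (h : IsFaceOf P F) : F ⊆ P := by
  rcases h with rfl | rfl | ⟨c, a, -, -, rfl⟩
  · exact Set.empty_subset _
  · exact subset_rfl
  · exact Set.sep_subset _ _

theorem IsFaceOf.eq_of_subset {P F F' : Set (ESp d)} (hF' : IsFaceOf P F') (hFP : F ⊆ P)
    (hne : F'.Nonempty) (hsub : F' ⊆ F) (hdim : polyDim F ≤ polyDim F') : F = F' := by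
  rcases hF' with rfl | rfl | ⟨c, a, -, -, rfl⟩
  · exact absurd hne Set.not_nonempty_empty
  · exact hFP.antisymm hsub
  obtain ⟨q, hq⟩ := hne
  have hspan : vectorSpan ℝ {x ∈ P | ⟪c, x⟫ = a} = vectorSpan ℝ F :=
    Submodule.eq_of_le_of_finrank_le (vectorSpan_mono ℝ hsub)
      (by simpa only [polyDim_eq_finrank_vectorSpan] using hdim)
  have hc : c ∈ (vectorSpan ℝ F)ᗮ :=
    hspan ▸ mem_orthogonal_vectorSpan_of_inner_eq fun x hx => hx.2
  refine hsub.antisymm' fun x hx => ⟨hFP hx, ?_⟩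
  rw [inner_eq_of_mem_orthogonal_vectorSpan hc hx (hsub hq), hq.2]

theorem polyDim_lt_of_subset_of_inner_ne {G G' : Set (ESp d)} (hsub : G ⊆ G') {e p w : ESp d}
    (he : e ∈ (vectorSpan ℝ G)ᗮ) (hp : p ∈ G) (hw : w ∈ G') (hew : ⟪e, w⟫ ≠ ⟪e, p⟫) :
    polyDim G < polyDim G' := by
  rw [polyDim_eq_finrank_vectorSpan, polyDim_eq_finrank_vectorSpan]
  refine Submodule.finrank_lt_finrank_of_lt <| SetLike.lt_iff_le_and_exists.mpr
    ⟨vectorSpan_mono ℝ hsub, w -ᵥ p, vsub_mem_vectorSpan ℝ hw (hsub hp), fun hwp => hew ?_⟩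
  have := Submodule.inner_left_of_mem_orthogonal hwp he
  rwa [vsub_eq_sub, inner_sub_right, sub_eq_zero] at this

theorem exists_tilted_supporting_hyperplane {P : Set (ESp d)} {V : Finset (ESp d)}
    (hPV : P = convexHull ℝ ↑V) (hV : vectorSpan ℝ (V : Set (ESp d)) = ⊤)
    {c y p : ESp d} {a : ℝ} (hle : ∀ x ∈ P, ⟪c, x⟫ ≤ a) (hya : ⟪c, y⟫ < a)
    (hp : p ∈ {x ∈ P | ⟪c, x⟫ = a}) (hdim : polyDim {x ∈ P | ⟪c, x⟫ = a} + 1 < d) :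
    ∃ c' a', c' ≠ 0 ∧ (∀ x ∈ P, ⟪c', x⟫ ≤ a') ∧ ⟪c', y⟫ < a' ∧
      {x ∈ P | ⟪c, x⟫ = a} ⊆ {x ∈ P | ⟪c', x⟫ = a'} ∧
      polyDim {x ∈ P | ⟪c, x⟫ = a} < polyDim {x ∈ P | ⟪c', x⟫ = a'} := by
  set G := {x ∈ P | ⟪c, x⟫ = a}
  have hVP : (V : Set (ESp d)) ⊆ P := hPV ▸ subset_convexHull ℝ _
  have hK : vectorSpan ℝ (insert y G) ≠ ⊤ := fun h => by
    have := finrank_vectorSpan_insert_le_set ℝ G y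
    rw [h, finrank_top, finrank_euclideanSpace_fin, ← polyDim_eq_finrank_vectorSpan] at this
    omega
  -- The tilt direction `e` is constant on `G ∪ {y}` but increases towards some vertex.
  obtain ⟨e, he, v₀, hv₀V, hv₀⟩ := exists_mem_orthogonal_inner_lt hV hK p
  have he_const : ∀ x ∈ insert y G, ⟪e, x⟫ = ⟪e, p⟫ := fun x hx =>
    inner_eq_of_mem_orthogonal_vectorSpan he hx (Set.mem_insert_of_mem _ hp)
  obtain ⟨t, htV, w, hwV, hw, hwt₀⟩ := V.exists_add_mul_le_zero_eq_zero
    (f := fun v => ⟪c, v⟫ - a) (g := fun v => ⟪e, v⟫ - ⟪e, p⟫)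
    (fun v hv => sub_nonpos.mpr (hle v (hVP hv))) ⟨v₀, hv₀V, sub_pos.mpr hv₀⟩
  have key : ∀ x, ⟪c + t • e, x⟫ - (a + t * ⟪e, p⟫) = ⟪c, x⟫ - a + t * (⟪e, x⟫ - ⟪e, p⟫) := by
    intro x
    rw [inner_add_left, real_inner_smul_left]
    ring
  have hyt : ⟪c + t • e, y⟫ < a + t * ⟪e, p⟫ := by
    have := key y
    rw [he_const y (Set.mem_insert _ _), sub_self, mul_zero] at this
    linarith
  have hwt : ⟪c + t • e, w⟫ = a + t * ⟪e, p⟫ := by linarith [key w, hwt₀]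
  have hG : G ⊆ {x ∈ P | ⟪c + t • e, x⟫ = a + t * ⟪e, p⟫} := fun x hx => by
    have := key x
    rw [he_const x (Set.mem_insert_of_mem _ hx), hx.2, sub_self, sub_self, mul_zero] at this
    exact ⟨hx.1, by linarith⟩
  refine ⟨c + t • e, a + t * ⟪e, p⟫, ?_, ?_, hyt, hG, ?_⟩
  · intro h
    rw [h, inner_zero_left] at hyt hwt
    linarith
  · rw [hPV]
    refine fun x hx =>
      convexHull_min (fun v hv => ?_) (convex_halfSpace_le (innerₛₗ ℝ _).isLinear _) hx
    show ⟪c + t • e, v⟫ ≤ a + t * ⟪e, p⟫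
    linarith [key v, htV v hv]
  · exact polyDim_lt_of_subset_of_inner_ne hG
      (Submodule.orthogonal_le (vectorSpan_mono ℝ (Set.subset_insert y G)) he) hp
      ⟨hVP hwV, hwt⟩ (by linarith)

theorem exists_facet_superset_not_mem {P : Set (ESp d)} {V : Finset (ESp d)}
    (hPV : P = convexHull ℝ ↑V) (hV : vectorSpan ℝ (V : Set (ESp d)) = ⊤)
    {c y p : ESp d} {a : ℝ} (hc : c ≠ 0) (hle : ∀ x ∈ P, ⟪c, x⟫ ≤ a) (hya : ⟪c, y⟫ < a)
    (hp : p ∈ {x ∈ P | ⟪c, x⟫ = a}) :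
    ∃ G, IsFaceOf P G ∧ polyDim G + 1 = d ∧ {x ∈ P | ⟪c, x⟫ = a} ⊆ G ∧ y ∉ G := by
  induction hn : d - polyDim {x ∈ P | ⟪c, x⟫ = a} using Nat.strong_induction_on
    generalizing c a with
  | _ n ih =>
  have hface : IsFaceOf P {x ∈ P | ⟪c, x⟫ = a} := Or.inr (Or.inr ⟨c, a, hc, hle, rfl⟩)
  have hG : ∀ x ∈ {x ∈ P | ⟪c, x⟫ = a}, ⟪c, x⟫ = a := fun x hx => hx.2
  rcases (polyDim_add_one_le_of_inner_eq hc hG).eq_or_lt with hfacet | hlt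
  · exact ⟨_, hface, hfacet, subset_rfl, fun hy => hya.ne hy.2⟩
  obtain ⟨c', a', hc', hle', hya', hsub, hdim⟩ :=
    exists_tilted_supporting_hyperplane hPV hV hle hya hp hlt
  obtain ⟨G, hG, hGd, hG', hyG⟩ := ih _ (by omega) hc' hle' hya' (hsub hp) rfl
  exact ⟨G, hG, hGd, hsub.trans hG', hyG⟩

theorem IsFaceOf.mem_of_forall_facet {P F : Set (ESp d)} {V : Finset (ESp d)}
    (hPV : P = convexHull ℝ ↑V) (hV : vectorSpan ℝ (V : Set (ESp d)) = ⊤)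
    (hF : IsFaceOf P F) (hne : F.Nonempty) {y : ESp d} (hy : y ∈ P)
    (h : ∀ G, IsFaceOf P G → polyDim G + 1 = d → F ⊆ G → y ∈ G) : y ∈ F := by
  rcases hF with rfl | rfl | ⟨c, a, hc, hle, rfl⟩
  · exact absurd hne Set.not_nonempty_empty
  · exact hy
  by_contra hyF
  obtain ⟨p, hp⟩ := hne
  obtain ⟨G, hG, hGd, hsub, hyG⟩ := exists_facet_superset_not_mem hPV hV hc hle
    ((hle y hy).lt_of_ne fun h' => hyF ⟨hy, h'⟩) hp
  exact hyG (h G hG hGd hsub)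

theorem edges_le_of_facets_le_general
    (d k : ℕ) (P : Set (ESp d)) (hP : IsPolytope P)
    (hdim : polyDim P = d)
    (hfin : {F | IsFaceOf P F ∧ polyDim F + 1 = d}.Finite)
    (hfacets : {F | IsFaceOf P F ∧ polyDim F + 1 = d}.ncard ≤ k) :
    {F | IsFaceOf P F ∧ polyDim F = 1}.Finite ∧
    {F | IsFaceOf P F ∧ polyDim F = 1}.ncard ≤ k.choose (k / 2) ∧
    {F | IsFaceOf P F ∧ polyDim F = 1}.ncard ≤ 2 ^ k := by
  obtain ⟨V, hPV⟩ := hP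
  have hV : vectorSpan ℝ (V : Set (ESp d)) = ⊤ :=
    vectorSpan_eq_top_of_polyDim_eq (by rwa [← polyDim_convexHull, ← hPV])
  obtain ⟨hfinite, hcard⟩ := Set.ncard_le_choose_of_reflects
    (X := {F | IsFaceOf P F ∧ polyDim F = 1}) hfin hfacets (· ⊆ ·) <| by
    rintro E ⟨hE, hE1⟩ E' ⟨hE', hE'1⟩ hEE'
    have hsub : E' ⊆ E := fun y hy =>
      hE.mem_of_forall_facet hPV hV (nonempty_of_polyDim_pos (by omega)) (hE'.subset hy)
        fun G hG hGd hEG => hEE' G ⟨hG, hGd⟩ hEG hy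
    exact hE'.eq_of_subset hE.subset (nonempty_of_polyDim_pos (by omega)) hsub (by omega)
  exact ⟨hfinite, hcard, hcard.trans (Nat.choose_le_two_pow _ _)⟩

/-- **Sperner bound.** A `d`-polytope with at most `k` facets has at most
`C(k, ⌊k/2⌋) ≤ 2^k` edges. -/
theorem edges_le_of_facets_le
    (d k : ℕ) (hd : 2 ≤ d) (P : Set (ESp d)) (hP : IsPolytope P)
    (hdim : polyDim P = d)
    (hfin : {F | IsFaceOf P F ∧ polyDim F + 1 = d}.Finite)
    (hfacets : {F | IsFaceOf P F ∧ polyDim F + 1 = d}.ncard ≤ k) :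
    {F | IsFaceOf P F ∧ polyDim F = 1}.Finite ∧
    {F | IsFaceOf P F ∧ polyDim F = 1}.ncard ≤ k.choose (k / 2) ∧
    {F | IsFaceOf P F ∧ polyDim F = 1}.ncard ≤ 2 ^ k :=
  edges_le_of_facets_le_general d k P hP hdim hfin hfacets
end
end
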